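/- arXiv:2201.12224 — 7 statements merged into one kernel-verified Lean document; each statement's English description precedes it below -/
import Mathlib

section
/- Let ε > 0 and suppose each reward function r_i takes values in [0,1]. For each player i, let δ_i ∈ (0,1) be such that the shrunk set P_i^{δ_i} is nonempty and every ρ_i ∈ P_i has a point ρ̂_i ∈ P_i^{δ_i} with ‖ρ_i − ρ̂_i‖_2 ≤ ε/√(|S_i||A_i|). Then every ε-Nash equilibrium of the virtual game with action sets P_1^{δ_1},…,P_n^{δ_n} (i.e., ρ* ∈ P^δ with V_i(ρ_i, ρ*_{-i}) ≤ V_i(ρ*) + ε for all i and all ρ_i ∈ P_i^{δ_i}) is a 2ε-Nash equilibrium of the virtual game with action sets P_1,…,P_n (i.e., V_i(ρ_i, ρ*_{-i}) ≤ V_i(ρ*) + 2ε for all i and all ρ_i ∈ P_i). -/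
open scoped BigOperators
open Finset

noncomputable section

/-- The probability simplex on a finite set `X`. -/
def probSimplex (X : Type*) [Fintype X] : Set (X → ℝ) :=
  {x | (∀ p, 0 ≤ x p) ∧ ∑ p, x p = 1}

/-- Payoff of a player with reward `ri` at a profile `ρ` in the virtual game. -/
def payoff {n : ℕ} {S A : Fin n → Type*} [∀ j, Fintype (S j)] [∀ j, Fintype (A j)]
    (ri : (∀ j, S j) → (∀ j, A j) → ℝ) (ρ : ∀ j, S j × A j → ℝ) : ℝ :=
  ∑ s : ∀ j, S j, ∑ a : ∀ j, A j, (∏ j, ρ j (s j, a j)) * ri s a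


def piProdEquivAux {n : ℕ} (S A : Fin n → Type*) : ((∀ j, S j) × (∀ j, A j)) ≃ (∀ j, S j × A j) where
  toFun := fun x j => (x.1 j, x.2 j)
  invFun := fun φ => (fun j => (φ j).1, fun j => (φ j).2)
  left_inv := fun x => rfl
  right_inv := fun φ => funext fun j => rfl

lemma sum_sum_prod_eq {n : ℕ} {S A : Fin n → Type*} [∀ j, Fintype (S j)] [∀ j, Fintype (A j)]
    (f : ∀ j, S j × A j → ℝ) :
    ∑ s : ∀ j, S j, ∑ a : ∀ j, A j, ∏ j, f j (s j, a j) = ∏ j, ∑ p, f j p := by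
  rw [Finset.prod_univ_sum, Fintype.piFinset_univ, ← Fintype.sum_prod_type']
  exact Fintype.sum_bijective (piProdEquivAux S A) (piProdEquivAux S A).bijective _ _
    (fun x => rfl)

lemma prod_update_apply {n : ℕ} {S A : Fin n → Type*}
    (g : ∀ j, S j × A j → ℝ) (i : Fin n) (x : S i × A i → ℝ)
    [∀ j, Fintype (S j)] [∀ j, Fintype (A j)]
    (s : ∀ j, S j) (a : ∀ j, A j) :
    ∏ j, (Function.update g i x) j (s j, a j)
      = x (s i, a i) * ∏ j ∈ Finset.univ.erase i, g j (s j, a j) := by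
  rw [← Finset.mul_prod_erase Finset.univ _ (Finset.mem_univ i)]
  rw [Function.update_self]
  congr 1
  refine Finset.prod_congr rfl fun j hj => ?_
  rw [Function.update_of_ne (Finset.ne_of_mem_erase hj)]

/-- an ε-Nash equilibrium of the virtual game played over the shrunk
sets `P_i^{δ_i}` is a 2ε-Nash equilibrium of the virtual game over the sets `P_i`,
provided every point of `P_i` is within Euclidean distance `ε/√(|S_i||A_i|)` of the
shrunk set. -/
theorem shrunk_epsNE_is_2eps_NE
    {n : ℕ} {S A : Fin n → Type*}
    [∀ j, Fintype (S j)] [∀ j, Nonempty (S j)]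
    [∀ j, Fintype (A j)] [∀ j, Nonempty (A j)]
    (r : ∀ _ : Fin n, (∀ j, S j) → (∀ j, A j) → ℝ)
    (hr : ∀ i s a, r i s a ∈ Set.Icc (0:ℝ) 1)
    (P : ∀ i : Fin n, Set ((S i × A i) → ℝ))
    (hPne : ∀ i, (P i).Nonempty)
    (hPcpt : ∀ i, IsCompact (P i))
    (hPcvx : ∀ i, Convex ℝ (P i))
    (hPsub : ∀ i, P i ⊆ probSimplex (S i × A i))
    (ε : ℝ) (hε : 0 < ε)
    (δ : Fin n → ℝ) (hδ : ∀ i, δ i ∈ Set.Ioo (0:ℝ) 1)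
    -- the shrunk sets
    (Pδ : ∀ i : Fin n, Set ((S i × A i) → ℝ))
    (hPδ : ∀ i, Pδ i = {x ∈ P i | ∀ p, δ i ≤ x p})
    (hPδne : ∀ i, (Pδ i).Nonempty)
    -- every point of `P i` has a close point in `Pδ i`
    (hdense : ∀ i, ∀ ρi ∈ P i, ∃ ρhat ∈ Pδ i,
      Real.sqrt (∑ p, (ρi p - ρhat p) ^ 2) ≤
        ε / Real.sqrt ((Fintype.card (S i) : ℝ) * (Fintype.card (A i) : ℝ)))
    -- ρ* is an ε-NE of the shrunk game
    (ρstar : ∀ j, S j × A j → ℝ) (hρstar : ∀ i, ρstar i ∈ Pδ i)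
    (hNE : ∀ i : Fin n, ∀ ρi ∈ Pδ i,
      payoff (r i) (Function.update ρstar i ρi) ≤ payoff (r i) ρstar + ε) :
    -- then ρ* is a 2ε-NE of the original game
    ∀ i : Fin n, ∀ ρi ∈ P i,
      payoff (r i) (Function.update ρstar i ρi) ≤ payoff (r i) ρstar + 2 * ε := by
  intro i ρi hρi
  obtain ⟨ρhat, hhat, hclose⟩ := hdense i ρi hρi
  have hstarP : ∀ j, ρstar j ∈ P j := fun j => by
    have hj := hρstar j; rw [hPδ j] at hj; exact hj.1
  have hnn : ∀ j p, 0 ≤ ρstar j p := fun j => (hPsub j (hstarP j)).1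
  have hsum1 : ∀ j, ∑ p, ρstar j p = 1 := fun j => (hPsub j (hstarP j)).2
  have hNEhat := hNE i ρhat hhat
  set d : S i × A i → ℝ := fun p => |ρi p - ρhat p| with hd_def
  -- Step 1: the payoff difference is bounded by the ℓ¹ distance
  have hdiff : payoff (r i) (Function.update ρstar i ρi)
      - payoff (r i) (Function.update ρstar i ρhat) ≤ ∑ p, d p := by
    have expand : payoff (r i) (Function.update ρstar i ρi)
        - payoff (r i) (Function.update ρstar i ρhat)
        = ∑ s : ∀ j, S j, ∑ a : ∀ j, A j,
            ((ρi (s i, a i) - ρhat (s i, a i)) *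
              ∏ j ∈ Finset.univ.erase i, ρstar j (s j, a j)) * r i s a := by
      rw [payoff, payoff, ← Finset.sum_sub_distrib]
      refine Finset.sum_congr rfl fun s _ => ?_
      rw [← Finset.sum_sub_distrib]
      refine Finset.sum_congr rfl fun a _ => ?_
      rw [prod_update_apply, prod_update_apply]
      ring
    have eq2 : ∑ s : ∀ j, S j, ∑ a : ∀ j, A j,
        d (s i, a i) * ∏ j ∈ Finset.univ.erase i, ρstar j (s j, a j) = ∑ p, d p := by
      calc ∑ s : ∀ j, S j, ∑ a : ∀ j, A j,
            d (s i, a i) * ∏ j ∈ Finset.univ.erase i, ρstar j (s j, a j)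
          = ∑ s : ∀ j, S j, ∑ a : ∀ j, A j,
            ∏ j, (Function.update ρstar i d) j (s j, a j) :=
            Finset.sum_congr rfl fun s _ => Finset.sum_congr rfl fun a _ =>
              (prod_update_apply ρstar i d s a).symm
        _ = ∏ j, ∑ p, (Function.update ρstar i d) j p := sum_sum_prod_eq _
        _ = (∑ p, d p) * ∏ j ∈ Finset.univ.erase i, ∑ p, ρstar j p := by
            rw [← Finset.mul_prod_erase Finset.univ _ (Finset.mem_univ i),
              Function.update_self]
            congr 1
            refine Finset.prod_congr rfl fun j hj => ?_
            rw [Function.update_of_ne (Finset.ne_of_mem_erase hj)]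
        _ = ∑ p, d p := by
            rw [Finset.prod_congr rfl (fun j _ => hsum1 j), Finset.prod_const_one, mul_one]
    rw [expand, ← eq2]
    refine Finset.sum_le_sum fun s _ => Finset.sum_le_sum fun a _ => ?_
    have hQ : (0:ℝ) ≤ ∏ j ∈ Finset.univ.erase i, ρstar j (s j, a j) :=
      Finset.prod_nonneg fun j _ => hnn j _
    have hR := hr i s a
    calc ((ρi (s i, a i) - ρhat (s i, a i)) *
            ∏ j ∈ Finset.univ.erase i, ρstar j (s j, a j)) * r i s a
        ≤ (d (s i, a i) * ∏ j ∈ Finset.univ.erase i, ρstar j (s j, a j)) * r i s a :=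
          mul_le_mul_of_nonneg_right
            (mul_le_mul_of_nonneg_right (le_abs_self _) hQ) hR.1
      _ ≤ d (s i, a i) * ∏ j ∈ Finset.univ.erase i, ρstar j (s j, a j) :=
          mul_le_of_le_one_right (mul_nonneg (abs_nonneg _) hQ) hR.2
  -- Step 2: the ℓ¹ distance is at most ε
  have hl1 : ∑ p, d p ≤ ε := by
    have hcardpos : (0:ℝ) < Real.sqrt ((Fintype.card (S i) : ℝ) * (Fintype.card (A i) : ℝ)) := by
      have h1 : 0 < Fintype.card (S i) := Fintype.card_pos
      have h2 : 0 < Fintype.card (A i) := Fintype.card_pos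
      positivity
    have hcs : (∑ p, d p) ^ 2 ≤ (∑ p, (ρi p - ρhat p) ^ 2) * (Fintype.card (S i × A i) : ℝ) := by
      have h := Finset.sum_mul_sq_le_sq_mul_sq Finset.univ d (fun _ => (1:ℝ))
      simpa [hd_def, sq_abs, Finset.card_univ] using h
    have hsq : ∑ p, d p ≤ Real.sqrt ((∑ p, (ρi p - ρhat p) ^ 2) * (Fintype.card (S i × A i) : ℝ)) := by
      have h1 : ∑ p, d p = Real.sqrt ((∑ p, d p) ^ 2) :=
        (Real.sqrt_sq (Finset.sum_nonneg fun p _ => abs_nonneg _)).symm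
      rw [h1]
      exact Real.sqrt_le_sqrt hcs
    have hcard : (Fintype.card (S i × A i) : ℝ)
        = (Fintype.card (S i) : ℝ) * (Fintype.card (A i) : ℝ) := by
      rw [Fintype.card_prod]; push_cast; ring
    rw [hcard, Real.sqrt_mul (Finset.sum_nonneg fun p _ => sq_nonneg _)] at hsq
    calc ∑ p, d p ≤ Real.sqrt (∑ p, (ρi p - ρhat p) ^ 2) *
          Real.sqrt ((Fintype.card (S i) : ℝ) * (Fintype.card (A i) : ℝ)) := hsq
      _ ≤ (ε / Real.sqrt ((Fintype.card (S i) : ℝ) * (Fintype.card (A i) : ℝ))) *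
          Real.sqrt ((Fintype.card (S i) : ℝ) * (Fintype.card (A i) : ℝ)) :=
          mul_le_mul_of_nonneg_right hclose (Real.sqrt_nonneg _)
      _ = ε := div_mul_cancel₀ ε hcardpos.ne'
  linarith
end
end

section
/- Let X ⊆ ℝ^m be a nonempty convex compact set and h : X → ℝ a K-strongly convex continuous function (K > 0). Define h*(y) = max_{x∈X}(⟨x,y⟩ − h(x)), Π(y) = argmax_{x∈X}(⟨x,y⟩ − h(x)) (unique by strong convexity), and the Fenchel coupling F(p,y) = h(p) + h*(y) − ⟨y,p⟩. Let Y^1 ∈ ℝ^m, let η^ℓ > 0 and R^ℓ ∈ ℝ^m for ℓ ≥ 1, and define Y^{ℓ+1} = Y^ℓ + η^ℓ R^ℓ and ρ^ℓ = Π(Y^ℓ). Then for every θ ∈ X and every k ≥ 1: Σ_{ℓ=1}^k η^ℓ ⟨R^ℓ, θ − ρ^ℓ⟩ ≤ F(θ, Y^1) + (1/(2K)) Σ_{ℓ=1}^k (η^ℓ)^2 ‖R^ℓ‖^2. -/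
open scoped RealInnerProductSpace
open Finset Filter Topology

/-!
The Fenchel coupling `F(θ, y) = h θ + h* y - ⟪y, θ⟫` is a Lyapunov function for the scores.
It is nonnegative (Fenchel–Young), and since `h` is `K`-strongly convex the conjugate `h*` is
`1/K`-smooth with gradient `Π`, so one step `Y ↦ Y + η R` lowers `F(θ, ·)` by at least
`η ⟪R, θ - Π Y⟫ - η² ‖R‖² / (2K)`. Summing these one-step bounds telescopes.
-/

section StrongConvexity

variable {E : Type*} [NormedAddCommGroup E]

theorem StrongConvexOn.add_sq_norm_sub_le_of_isMinOn [NormedSpace ℝ E] {s : Set E} {m : ℝ}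
    {f : E → ℝ} {x₀ x : E} (hf : StrongConvexOn s m f) (hx₀ : x₀ ∈ s)
    (hmin : IsMinOn f s x₀) (hx : x ∈ s) :
    f x₀ + m / 2 * ‖x - x₀‖ ^ 2 ≤ f x := by
  have hsegment : ∀ t ∈ Set.Ioc (0 : ℝ) 1, f x₀ + m / 2 * (1 - t) * ‖x - x₀‖ ^ 2 ≤ f x := by
    rintro t ⟨ht₀, ht₁⟩
    have hconv := hf.2 hx hx₀ ht₀.le (sub_nonneg.2 ht₁) (add_sub_cancel t 1)
    have hlow : f x₀ ≤ f (t • x + (1 - t) • x₀) :=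
      hmin (hf.1 hx hx₀ ht₀.le (sub_nonneg.2 ht₁) (add_sub_cancel t 1))
    simp only [smul_eq_mul] at hconv
    -- compare the chord inequality at `t` with minimality, then divide by `t`; let `t → 0⁺` below
    refine le_of_mul_le_mul_left ?_ ht₀
    nlinarith
  have hlim : Tendsto (fun t : ℝ => f x₀ + m / 2 * (1 - t) * ‖x - x₀‖ ^ 2) (𝓝[>] 0)
      (𝓝 (f x₀ + m / 2 * (1 - 0) * ‖x - x₀‖ ^ 2)) :=
    ((continuous_const.add ((continuous_const.mul (continuous_const.sub continuous_id)).mul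
      continuous_const)).tendsto 0).mono_left nhdsWithin_le_nhds
  rw [sub_zero, mul_one] at hlim
  exact le_of_tendsto hlim (mem_of_superset (Ioc_mem_nhdsGT zero_lt_one) hsegment)

theorem StrongConvexOn.sub_inner [InnerProductSpace ℝ E] {s : Set E} {m : ℝ} {f : E → ℝ}
    (hf : StrongConvexOn s m f) (y : E) : StrongConvexOn s m fun x => f x - ⟪x, y⟫ := by
  have hlin : ConcaveOn ℝ s fun x => ⟪x, y⟫ :=
    ⟨hf.1, fun x _ z _ a b _ _ _ => by simp [inner_add_left, real_inner_smul_left]⟩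
  have hsub := hf.sub (uniformConcaveOn_zero.2 hlin)
  rwa [add_zero] at hsub

theorem real_inner_le_mul_sq_norm_add_inv_mul_sq_norm [InnerProductSpace ℝ E] {K : ℝ}
    (hK : 0 < K) (u v : E) : ⟪u, v⟫ ≤ K / 2 * ‖u‖ ^ 2 + 1 / (2 * K) * ‖v‖ ^ 2 := by
  have hsq : K / 2 * ‖u‖ ^ 2 + 1 / (2 * K) * ‖v‖ ^ 2 - ‖u‖ * ‖v‖
      = (K * ‖u‖ - ‖v‖) ^ 2 / (2 * K) := by
    field_simp
    ring
  have : 0 ≤ (K * ‖u‖ - ‖v‖) ^ 2 / (2 * K) := by positivity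
  linarith [real_inner_le_norm u v]

/-- The `1/K`-smoothness of the conjugate `h*`, whose gradient at `y` is the maximizer `p`. -/
theorem StrongConvexOn.inner_add_sub_le_of_isMaxOn [InnerProductSpace ℝ E] {s : Set E} {K : ℝ}
    {h : E → ℝ} {y d p q : E} (hh : StrongConvexOn s K h) (hK : 0 < K) (hp : p ∈ s)
    (hpmax : IsMaxOn (fun x => ⟪x, y⟫ - h x) s p) (hq : q ∈ s) :
    ⟪q, y + d⟫ - h q ≤ ⟪p, y⟫ - h p + ⟪d, p⟫ + 1 / (2 * K) * ‖d‖ ^ 2 := by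
  have hgap : h p - ⟪p, y⟫ + K / 2 * ‖q - p‖ ^ 2 ≤ h q - ⟪q, y⟫ :=
    (hh.sub_inner y).add_sq_norm_sub_le_of_isMinOn hp
      (isMinOn_iff.2 fun x hx => by linarith [isMaxOn_iff.1 hpmax x hx]) hq
  have hyoung := real_inner_le_mul_sq_norm_add_inv_mul_sq_norm hK (q - p) d
  rw [inner_sub_left, real_inner_comm d p] at hyoung
  rw [inner_add_right]
  linarith

end StrongConvexity

theorem sum_Icc_le_sub_add_of_le_sub_add {a b Φ : ℕ → ℝ} (k : ℕ)
    (hstep : ∀ ℓ, 1 ≤ ℓ → a ℓ ≤ Φ ℓ - Φ (ℓ + 1) + b ℓ) :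
    ∑ ℓ ∈ Icc 1 k, a ℓ ≤ Φ 1 - Φ (k + 1) + ∑ ℓ ∈ Icc 1 k, b ℓ := by
  induction k with
  | zero => simp
  | succ k ih =>
    rw [sum_Icc_succ_top (by omega), sum_Icc_succ_top (by omega)]
    linarith [hstep (k + 1) (by omega)]

theorem dual_averaging_fenchel_bound_general
    {m : ℕ} (X : Set (EuclideanSpace ℝ (Fin m)))
    (K : ℝ) (hK : 0 < K)
    (h : EuclideanSpace ℝ (Fin m) → ℝ)
    -- K-strong convexity of h on X
    (hstrong : ConvexOn ℝ X (fun x => h x - K / 2 * ‖x‖ ^ 2))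
    -- Π(y) is the (unique) maximizer of ⟨x,y⟩ − h(x) over X
    (Proj : EuclideanSpace ℝ (Fin m) → EuclideanSpace ℝ (Fin m))
    (hProjmem : ∀ y, Proj y ∈ X)
    (hProjmax : ∀ y, ∀ x ∈ X, ⟪x, y⟫ - h x ≤ ⟪Proj y, y⟫ - h (Proj y))
    -- h*(y) = max_{x∈X} (⟨x,y⟩ − h(x))
    (hstar : EuclideanSpace ℝ (Fin m) → ℝ)
    (hhstar : ∀ y, hstar y = ⟪Proj y, y⟫ - h (Proj y))
    -- Fenchel coupling
    (F : EuclideanSpace ℝ (Fin m) → EuclideanSpace ℝ (Fin m) → ℝ)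
    (hF : ∀ p y, F p y = h p + hstar y - ⟪y, p⟫)
    -- step sizes, payoff vectors, dual scores and iterates
    (η : ℕ → ℝ)
    (R : ℕ → EuclideanSpace ℝ (Fin m))
    (Y : ℕ → EuclideanSpace ℝ (Fin m))
    (hYrec : ∀ ℓ, 1 ≤ ℓ → Y (ℓ + 1) = Y ℓ + η ℓ • R ℓ)
    (ρ : ℕ → EuclideanSpace ℝ (Fin m))
    (hρ : ∀ ℓ, 1 ≤ ℓ → ρ ℓ = Proj (Y ℓ)) :
    ∀ θ ∈ X, ∀ k, 1 ≤ k →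
      ∑ ℓ ∈ Finset.Icc 1 k, η ℓ * ⟪R ℓ, θ - ρ ℓ⟫ ≤
        F θ (Y 1) + (1 / (2 * K)) * ∑ ℓ ∈ Finset.Icc 1 k, (η ℓ) ^ 2 * ‖R ℓ‖ ^ 2 := by
  intro θ hθ k _
  have hstrongK : StrongConvexOn X K h := strongConvexOn_iff_convex.2 hstrong
  have hF_nonneg : ∀ y, 0 ≤ F θ y := fun y => by
    rw [hF, hhstar, real_inner_comm θ y]
    linarith [hProjmax y θ hθ]
  have hstep : ∀ ℓ, 1 ≤ ℓ → η ℓ * ⟪R ℓ, θ - ρ ℓ⟫ ≤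
      F θ (Y ℓ) - F θ (Y (ℓ + 1)) + 1 / (2 * K) * (η ℓ ^ 2 * ‖R ℓ‖ ^ 2) := by
    intro ℓ hℓ
    have hsmooth := hstrongK.inner_add_sub_le_of_isMaxOn (d := η ℓ • R ℓ) hK
      (hProjmem (Y ℓ)) (isMaxOn_iff.2 (hProjmax (Y ℓ))) (hProjmem (Y ℓ + η ℓ • R ℓ))
    rw [← hhstar, ← hhstar, ← hρ ℓ hℓ, norm_smul, mul_pow, Real.norm_eq_abs, sq_abs,
      real_inner_smul_left] at hsmooth
    rw [hF, hF, hYrec ℓ hℓ, inner_add_left, real_inner_smul_left, inner_sub_right,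
      real_inner_comm θ (R ℓ)]
    linarith
  have htelescope := sum_Icc_le_sub_add_of_le_sub_add k hstep
  rw [← mul_sum] at htelescope
  linarith [hF_nonneg (Y (k + 1))]

/-- the dual-averaging (lazy mirror descent) regret bound via the
Fenchel coupling `F(p,y) = h(p) + h*(y) − ⟨y,p⟩`:
`∑_{ℓ=1}^k η^ℓ ⟨R^ℓ, θ − ρ^ℓ⟩ ≤ F(θ, Y^1) + (1/(2K)) ∑_{ℓ=1}^k (η^ℓ)² ‖R^ℓ‖²`. -/
theorem dual_averaging_fenchel_bound
    {m : ℕ} (X : Set (EuclideanSpace ℝ (Fin m)))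
    (hXne : X.Nonempty) (hXcvx : Convex ℝ X) (hXcpt : IsCompact X)
    (K : ℝ) (hK : 0 < K)
    (h : EuclideanSpace ℝ (Fin m) → ℝ)
    (hcont : ContinuousOn h X)
    -- K-strong convexity of h on X
    (hstrong : ConvexOn ℝ X (fun x => h x - K / 2 * ‖x‖ ^ 2))
    -- Π(y) is the (unique) maximizer of ⟨x,y⟩ − h(x) over X
    (Proj : EuclideanSpace ℝ (Fin m) → EuclideanSpace ℝ (Fin m))
    (hProjmem : ∀ y, Proj y ∈ X)
    (hProjmax : ∀ y, ∀ x ∈ X, ⟪x, y⟫ - h x ≤ ⟪Proj y, y⟫ - h (Proj y))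
    -- h*(y) = max_{x∈X} (⟨x,y⟩ − h(x))
    (hstar : EuclideanSpace ℝ (Fin m) → ℝ)
    (hhstar : ∀ y, hstar y = ⟪Proj y, y⟫ - h (Proj y))
    -- Fenchel coupling
    (F : EuclideanSpace ℝ (Fin m) → EuclideanSpace ℝ (Fin m) → ℝ)
    (hF : ∀ p y, F p y = h p + hstar y - ⟪y, p⟫)
    -- step sizes, payoff vectors, dual scores and iterates
    (η : ℕ → ℝ) (hη : ∀ ℓ, 1 ≤ ℓ → 0 < η ℓ)
    (R : ℕ → EuclideanSpace ℝ (Fin m))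
    (Y : ℕ → EuclideanSpace ℝ (Fin m))
    (hYrec : ∀ ℓ, 1 ≤ ℓ → Y (ℓ + 1) = Y ℓ + η ℓ • R ℓ)
    (ρ : ℕ → EuclideanSpace ℝ (Fin m))
    (hρ : ∀ ℓ, 1 ≤ ℓ → ρ ℓ = Proj (Y ℓ)) :
    ∀ θ ∈ X, ∀ k, 1 ≤ k →
      ∑ ℓ ∈ Finset.Icc 1 k, η ℓ * ⟪R ℓ, θ - ρ ℓ⟫ ≤
        F θ (Y 1) + (1 / (2 * K)) * ∑ ℓ ∈ Finset.Icc 1 k, (η ℓ) ^ 2 * ‖R ℓ‖ ^ 2 :=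
  dual_averaging_fenchel_bound_general X K hK h hstrong Proj hProjmem hProjmax hstar hhstar F hF η R
    Y hYrec ρ hρ
end

section
/- Let X ⊆ ℝ^m be a nonempty convex compact set, h : X → ℝ a K-strongly convex continuous function (K > 0), h*(y) = max_{x∈X}(⟨x,y⟩ − h(x)), Π(y) = argmax_{x∈X}(⟨x,y⟩ − h(x)) (unique by strong convexity), and F(p,y) = h(p) + h*(y) − ⟨y,p⟩ the Fenchel coupling. Then F(p,y) ≥ 0 for all p ∈ X and all y ∈ ℝ^m, and for all p ∈ X and all y, y' ∈ ℝ^m: F(p,y') ≤ F(p,y) + ⟨y' − y, Π(y) − p⟩ + ‖y' − y‖²/(2K). -/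
open scoped BigOperators RealInnerProductSpace
open Finset

noncomputable section


lemma combo_norm_sq {E : Type*} [NormedAddCommGroup E] [InnerProductSpace ℝ E]
    (u v : E) (a b : ℝ) (hab : a + b = 1) :
    ‖a • u + b • v‖ ^ 2 = a * ‖u‖ ^ 2 + b * ‖v‖ ^ 2 - a * b * ‖u - v‖ ^ 2 := by
  have h1 : ‖a • u + b • v‖ ^ 2 = ⟪a • u + b • v, a • u + b • v⟫ :=
    (real_inner_self_eq_norm_sq _).symm
  have h2 : ‖u - v‖ ^ 2 = ⟪u - v, u - v⟫ := (real_inner_self_eq_norm_sq _).symm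
  have h3 : ‖u‖ ^ 2 = ⟪u, u⟫ := (real_inner_self_eq_norm_sq _).symm
  have h4 : ‖v‖ ^ 2 = ⟪v, v⟫ := (real_inner_self_eq_norm_sq _).symm
  simp only [h1, h2, h3, h4, inner_add_add_self, inner_sub_sub_self,
    real_inner_smul_left, real_inner_smul_right]
  linear_combination (a * (⟪u, u⟫ : ℝ) + b * ⟪v, v⟫) * hab

set_option maxHeartbeats 1000000 in
/-- the Fenchel coupling `F(p,y) = h(p) + h*(y) − ⟨y,p⟩` of a
K-strongly convex function is nonnegative and satisfies
`F(p,y') ≤ F(p,y) + ⟨y' − y, Π(y) − p⟩ + ‖y' − y‖²/(2K)`. -/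
theorem fenchel_coupling_nonneg_and_descent
    {m : ℕ} (X : Set (EuclideanSpace ℝ (Fin m)))
    (hXne : X.Nonempty) (hXcvx : Convex ℝ X) (hXcpt : IsCompact X)
    (K : ℝ) (hK : 0 < K)
    (h : EuclideanSpace ℝ (Fin m) → ℝ)
    (hcont : ContinuousOn h X)
    -- K-strong convexity of h on X
    (hstrong : ConvexOn ℝ X (fun x => h x - K / 2 * ‖x‖ ^ 2))
    -- Proj(y) is the (unique) maximizer of ⟨x,y⟩ − h(x) over X
    (Proj : EuclideanSpace ℝ (Fin m) → EuclideanSpace ℝ (Fin m))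
    (hProjmem : ∀ y, Proj y ∈ X)
    (hProjmax : ∀ y, ∀ x ∈ X, ⟪x, y⟫ - h x ≤ ⟪Proj y, y⟫ - h (Proj y))
    -- h*(y) = max_{x∈X} (⟨x,y⟩ − h(x))
    (hstar : EuclideanSpace ℝ (Fin m) → ℝ)
    (hhstar : ∀ y, hstar y = ⟪Proj y, y⟫ - h (Proj y))
    -- Fenchel coupling
    (F : EuclideanSpace ℝ (Fin m) → EuclideanSpace ℝ (Fin m) → ℝ)
    (hF : ∀ p y, F p y = h p + hstar y - ⟪y, p⟫) :
    (∀ p ∈ X, ∀ y, 0 ≤ F p y) ∧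
    (∀ p ∈ X, ∀ y y',
      F p y' ≤ F p y + ⟪y' - y, Proj y - p⟫ + ‖y' - y‖ ^ 2 / (2 * K)) := by
  -- key quantitative maximality lemma
  have key : ∀ y, ∀ x ∈ X,
      ⟪x, y⟫ - h x + K / 2 * ‖x - Proj y‖ ^ 2 ≤ ⟪Proj y, y⟫ - h (Proj y) := by
    intro y x hx
    set xs := Proj y with hxs
    have hxsX : xs ∈ X := hProjmem y
    set C := ‖x - xs‖ ^ 2 with hC
    have hC0 : 0 ≤ C := sq_nonneg _
    have hstep : ∀ t : ℝ, 0 < t → t < 1 →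
        ⟪x, y⟫ - h x + K / 2 * (1 - t) * C ≤ ⟪xs, y⟫ - h xs := by
      intro t ht0 ht1
      have ha : (0:ℝ) ≤ 1 - t := by linarith
      have hb : (0:ℝ) ≤ t := le_of_lt ht0
      have hab : (1 - t) + t = 1 := by ring
      have hzX : (1 - t) • xs + t • x ∈ X := hXcvx hxsX hx ha hb hab
      have hcvx := hstrong.2 hxsX hx ha hb hab
      simp only [smul_eq_mul] at hcvx
      have hnorm : ‖(1 - t) • xs + t • x‖ ^ 2
          = (1 - t) * ‖xs‖ ^ 2 + t * ‖x‖ ^ 2 - (1 - t) * t * ‖xs - x‖ ^ 2 :=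
        combo_norm_sq xs x (1 - t) t hab
      have hnn : ‖xs - x‖ = ‖x - xs‖ := norm_sub_rev _ _
      have hinner : ⟪(1 - t) • xs + t • x, y⟫ = (1 - t) * ⟪xs, y⟫ + t * ⟪x, y⟫ := by
        rw [inner_add_left, real_inner_smul_left, real_inner_smul_left]
      have hmax := hProjmax y _ hzX
      -- combine
      have hh : h ((1 - t) • xs + t • x)
          ≤ (1 - t) * h xs + t * h x - K / 2 * ((1 - t) * t) * C := by
        have := hcvx
        rw [hnorm] at this
        rw [hC, ← hnn]
        nlinarith [this]
      have hg : (1 - t) * (⟪xs, y⟫ - h xs) + t * (⟪x, y⟫ - h x)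
          + K / 2 * ((1 - t) * t) * C ≤ ⟪xs, y⟫ - h xs := by
        calc (1 - t) * (⟪xs, y⟫ - h xs) + t * (⟪x, y⟫ - h x) + K / 2 * ((1 - t) * t) * C
            ≤ ⟪(1 - t) • xs + t • x, y⟫ - h ((1 - t) • xs + t • x) := by
              rw [hinner]; nlinarith [hh]
          _ ≤ ⟪xs, y⟫ - h xs := hmax
      -- divide by t
      have ht' : t * (⟪x, y⟫ - h x + K / 2 * (1 - t) * C) ≤ t * (⟪xs, y⟫ - h xs) := by
        nlinarith [hg]
      exact le_of_mul_le_mul_left (by linarith [ht']) ht0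
    -- let t → 0 via ε argument
    have hfin : ∀ ε > 0, ⟪x, y⟫ - h x + K / 2 * C ≤ ⟪xs, y⟫ - h xs + ε := by
      intro ε hε
      set t := min (1/2 : ℝ) (ε / (K / 2 * C + 1)) with htdef
      have hden : (0:ℝ) < K / 2 * C + 1 := by nlinarith
      have ht0 : 0 < t := lt_min (by norm_num) (div_pos hε hden)
      have ht1 : t < 1 := lt_of_le_of_lt (min_le_left _ _) (by norm_num)
      have hstep' := hstep t ht0 ht1
      have htle : t ≤ ε / (K / 2 * C + 1) := min_le_right _ _
      have h2 : K / 2 * t * C ≤ ε := by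
        have : t * (K / 2 * C + 1) ≤ ε := by
          rw [div_eq_mul_inv] at htle
          calc t * (K / 2 * C + 1) ≤ ε * (K / 2 * C + 1)⁻¹ * (K / 2 * C + 1) := by
                apply mul_le_mul_of_nonneg_right htle (le_of_lt hden)
            _ = ε := by field_simp
        nlinarith
      nlinarith [hstep']
    have := le_of_forall_pos_le_add hfin
    linarith
  constructor
  · intro p hp y
    have hm := hProjmax y p hp
    have hc : ⟪y, p⟫ = ⟪p, y⟫ := real_inner_comm p y
    rw [hF, hhstar, hc]; linarith
  · intro p hp y y'
    have hkey := key y (Proj y') (hProjmem y')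
    -- inner product identities
    have e1 : ⟪Proj y', y'⟫ = ⟪Proj y', y⟫ + ⟪Proj y', y' - y⟫ := by
      rw [inner_sub_right]; ring
    have e2 : ⟪Proj y', y' - y⟫ = ⟪Proj y, y' - y⟫ + ⟪Proj y' - Proj y, y' - y⟫ := by
      rw [inner_sub_left]; ring
    have e3 : ⟪y' - y, Proj y - p⟫ = ⟪Proj y, y' - y⟫ - ⟪y', p⟫ + ⟪y, p⟫ := by
      simp only [inner_sub_left, inner_sub_right]
      linarith [real_inner_comm (Proj y) y', real_inner_comm (Proj y) y,
        real_inner_comm p y', real_inner_comm p y]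
    have e4 : ⟪Proj y' - Proj y, y' - y⟫ ≤ ‖Proj y' - Proj y‖ * ‖y' - y‖ :=
      real_inner_le_norm _ _
    have e5 : ‖Proj y' - Proj y‖ * ‖y' - y‖
        ≤ K / 2 * ‖Proj y' - Proj y‖ ^ 2 + ‖y' - y‖ ^ 2 / (2 * K) := by
      have hD : ‖y' - y‖ ^ 2 / (2 * K) * (2 * K) = ‖y' - y‖ ^ 2 := by
        field_simp
      nlinarith [sq_nonneg (K * ‖Proj y' - Proj y‖ - ‖y' - y‖), hK, hD]
    rw [hF, hF, hhstar, hhstar]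
    linarith [hkey, e1, e2, e3, e4, e5]
end
end

section
/- Let Δ be the probability simplex in ℝ^m, let X be a nonempty compact convex subset of Δ, let y = (y_1,…,y_m) be a coordinatewise nonpositive vector, and let x^k ∈ X have all coordinates strictly positive. Define the two-step mirror-descent update: x^{k+1/2} = argmax_{x∈Δ} {⟨y, x⟩ − D_KL(x, x^k)} and x^{k+1} = argmin_{x∈X} D_KL(x, x^{k+1/2}), where D_KL(x,y) = Σ_r x_r log(x_r/y_r) is the Kullback–Leibler divergence (valued in [0,∞]). Then for every z ∈ X: D_KL(z, x^{k+1}) − D_KL(z, x^k) ≤ ⟨y, x^k − z⟩ + (1/2)⟨y², x^k⟩, where y² = (y_1²,…,y_m²). -/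
/-!
The first step is the exponential tilt `x^{k+1/2} = x^k e^y / Z`, `Z = ∑ x^k_r e^{y_r}`: by the
Gibbs variational identity `⟨y, u⟩ - D(u, x^k) = log Z - D(u, x^k e^y / Z)` on the simplex, and
the equality case of Gibbs' inequality, the maximizer is unique. The second step is the KL
projection onto `X`, which satisfies the generalized Pythagorean inequality
`D(z, x^{k+1}) + D(x^{k+1}, x^{k+1/2}) ≤ D(z, x^{k+1/2})`. To see this, compare `x^{k+1}` with the
points `(1 - t) x^{k+1} + t z` of `X` through the mixture identity for `D(·, q)` and let `t → 0`;
the same limit shows `supp z ⊆ supp x^{k+1}`, so `D(z, x^{k+1})` is finite. Finally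
`D(z, x^{k+1/2}) = D(z, x^k) - ⟨y, z⟩ + log Z` and
`log Z ≤ Z - 1 ≤ ⟨y, x^k⟩ + ½⟨y², x^k⟩`, since `e^s ≤ 1 + s + s²/2` for `s ≤ 0`.
-/

open scoped BigOperators Classical
open Finset

noncomputable section

/-- Kullback–Leibler divergence, real-valued formula (valid when `y` has positive
coordinates, with the convention `0 · log(0/y_r) = 0`). -/
def klR {m : ℕ} (x y : Fin m → ℝ) : ℝ := ∑ r, x r * Real.log (x r / y r)

/-- Kullback–Leibler divergence valued in `[0,∞]` (as `EReal`), with the conventions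
`0 · log(0/y_r) = 0` and `x_r · log(x_r/0) = +∞` for `x_r > 0`. -/
def klE {m : ℕ} (x y : Fin m → ℝ) : EReal :=
  ∑ r, if x r = 0 then (0 : EReal)
    else if y r ≤ 0 then (⊤ : EReal)
    else ((x r * Real.log (x r / y r) : ℝ) : EReal)

open Real Filter Topology InformationTheory

lemma EReal.coe_finset_sum {ι : Type*} (s : Finset ι) (f : ι → ℝ) :
    ((∑ i ∈ s, f i : ℝ) : EReal) = ∑ i ∈ s, (f i : EReal) :=
  map_sum (⟨⟨Real.toEReal, EReal.coe_zero⟩, EReal.coe_add⟩ : ℝ →+ EReal) f s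

lemma Real.exp_le_quadratic_of_nonpos {x : ℝ} (hx : x ≤ 0) : exp x ≤ 1 + x + x ^ 2 / 2 := by
  have hneg : 1 + -x + (-x) ^ 2 / 2 ≤ exp (-x) := quadratic_le_exp_of_nonneg (by linarith)
  have hprod : exp x * exp (-x) = 1 := by rw [← exp_add, add_neg_cancel, exp_zero]
  -- `(1 + x + x²/2)(1 - x + x²/2) = 1 + x⁴/4`
  nlinarith [exp_pos (-x), sq_nonneg (x + 1), sq_nonneg (x ^ 2),
    mul_le_mul_of_nonneg_left hneg (by nlinarith [sq_nonneg (x + 1)] : 0 ≤ 1 + x + x ^ 2 / 2)]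

section Pointwise

variable {x y m q t : ℝ}

lemma mul_log_div_eq_add_mul_log_div (hm : m ≠ 0) (hq : q ≠ 0) :
    x * log (x / q) = x * log (x / m) + x * log (m / q) := by
  rcases eq_or_ne x 0 with rfl | hx
  · simp
  rw [← mul_add, ← log_mul (by positivity) (by positivity), div_mul_div_cancel₀ hm]

lemma mul_log_div_sub_sub_eq_mul_klFun (hy : y ≠ 0) :
    x * log (x / y) - (x - y) = y * klFun (x / y) := by
  rw [klFun_apply]
  field_simp
  ring

lemma sub_le_mul_log_div (hx : 0 ≤ x) (hy : 0 ≤ y) (hxy : 0 < x → 0 < y) :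
    x - y ≤ x * log (x / y) := by
  rcases hy.eq_or_lt with rfl | hy
  · rcases hx.eq_or_lt with rfl | hx
    · simp
    · exact absurd (hxy hx) (lt_irrefl 0)
  have := mul_nonneg hy.le (klFun_nonneg (div_nonneg hx hy.le))
  linarith [mul_log_div_sub_sub_eq_mul_klFun (x := x) hy.ne']

lemma mul_log_div_convexComb_eq {a b : ℝ} (ha : 0 ≤ a) (hb : 0 ≤ b) (hq : 0 < q)
    (ht₀ : 0 < t) (ht₁ : t < 1) :
    (1 - t) * (a * log (a / q)) + t * (b * log (b / q)) =
      ((1 - t) * a + t * b) * log (((1 - t) * a + t * b) / q) +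
        (1 - t) * (a * log (a / ((1 - t) * a + t * b))) +
          t * (b * log (b / ((1 - t) * a + t * b))) := by
  set c := (1 - t) * a + t * b
  rcases eq_or_ne c 0 with hc | hc
  · obtain ⟨rfl, rfl⟩ : a = 0 ∧ b = 0 := by
      constructor <;> nlinarith [mul_nonneg (sub_nonneg.2 ht₁.le) ha, mul_nonneg ht₀.le hb]
    simp [c]
  rw [mul_log_div_eq_add_mul_log_div (x := a) hc hq.ne',
    mul_log_div_eq_add_mul_log_div (x := b) hc hq.ne']
  ring

lemma mul_log_div_le_mul_log_div_convexComb_add {z w : ℝ} (hz : 0 ≤ z) (hw : 0 < w)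
    (ht₀ : 0 ≤ t) (ht₁ : t < 1) :
    z * log (z / w) ≤ z * log (z / ((1 - t) * w + t * z)) + t * (z ^ 2 / w) := by
  have hv : 0 < (1 - t) * w + t * z := by nlinarith [mul_nonneg ht₀ hz]
  have hlog : log (((1 - t) * w + t * z) / w) ≤ t * z / w := by
    have hle := log_le_sub_one_of_pos (div_pos hv hw)
    have hsub : ((1 - t) * w + t * z) / w - 1 = t * (z - w) / w := by field_simp; ring
    have hdrop : t * (z - w) / w ≤ t * z / w := by gcongr; linarith
    linarith
  rw [mul_log_div_eq_add_mul_log_div (x := z) hv.ne' hw.ne']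
  have hmul := mul_le_mul_of_nonneg_left hlog hz
  have hsq : z * (t * z / w) = t * (z ^ 2 / w) := by ring
  linarith

end Pointwise

section Divergence

variable {m : ℕ}

local notation "Δ" => stdSimplex ℝ (Fin m)

lemma klR_eq_sum_mul_log_div_sub_sub {x q : Fin m → ℝ} (hx : ∑ r, x r = 1) (hq : ∑ r, q r = 1) :
    klR x q = ∑ r, (x r * log (x r / q r) - (x r - q r)) := by
  rw [sum_sub_distrib, sum_sub_distrib, hx, hq, sub_self, sub_zero, klR]

lemma mul_log_div_sub_sub_le_klR {x q : Fin m → ℝ} (hx : x ∈ Δ) (hq : q ∈ Δ)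
    (hxq : ∀ r, 0 < x r → 0 < q r) (r : Fin m) :
    x r * log (x r / q r) - (x r - q r) ≤ klR x q := by
  rw [klR_eq_sum_mul_log_div_sub_sub hx.2 hq.2]
  exact single_le_sum (fun s _ ↦ sub_nonneg.2 (sub_le_mul_log_div (hx.1 s) (hq.1 s) (hxq s)))
    (mem_univ r)

lemma klR_nonneg {x q : Fin m → ℝ} (hx : x ∈ Δ) (hq : q ∈ Δ) (hxq : ∀ r, 0 < x r → 0 < q r) :
    0 ≤ klR x q := by
  rw [klR_eq_sum_mul_log_div_sub_sub hx.2 hq.2]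
  exact sum_nonneg fun s _ ↦ sub_nonneg.2 (sub_le_mul_log_div (hx.1 s) (hq.1 s) (hxq s))

lemma eq_of_klR_nonpos {x q : Fin m → ℝ} (hx : x ∈ Δ) (hq : q ∈ Δ) (hqpos : ∀ r, 0 < q r)
    (h : klR x q ≤ 0) : x = q := by
  have hterm (r : Fin m) : 0 ≤ q r * klFun (x r / q r) :=
    mul_nonneg (hqpos r).le (klFun_nonneg (div_nonneg (hx.1 r) (hqpos r).le))
  rw [klR_eq_sum_mul_log_div_sub_sub hx.2 hq.2] at h
  simp_rw [mul_log_div_sub_sub_eq_mul_klFun (hqpos _).ne'] at h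
  have hzero := (sum_eq_zero_iff_of_nonneg fun r _ ↦ hterm r).1
    (h.antisymm (sum_nonneg fun r _ ↦ hterm r))
  funext r
  have := (mul_eq_zero.1 (hzero r (mem_univ r))).resolve_left (hqpos r).ne'
  rwa [klFun_eq_zero_iff (div_nonneg (hx.1 r) (hqpos r).le), div_eq_one_iff_eq (hqpos r).ne']
    at this

lemma klE_eq_klR {x q : Fin m → ℝ} (hxq : ∀ r, x r ≠ 0 → 0 < q r) :
    klE x q = klR x q := by
  rw [klE, klR, EReal.coe_finset_sum]
  refine sum_congr rfl fun r _ ↦ ?_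
  by_cases hx : x r = 0
  · simp [hx]
  · rw [if_neg hx, if_neg (not_le.2 (hxq r hx))]

end Divergence

section Tilt

variable {m : ℕ}

local notation "Δ" => stdSimplex ℝ (Fin m)

def expTilt (x y : Fin m → ℝ) : Fin m → ℝ :=
  fun r ↦ x r * exp (y r) / ∑ s, x s * exp (y s)

variable {x : Fin m → ℝ} (y : Fin m → ℝ)

lemma sum_mul_exp_pos (hx : x ∈ Δ) (hxpos : ∀ r, 0 < x r) : 0 < ∑ s, x s * exp (y s) :=
  sum_pos (fun s _ ↦ mul_pos (hxpos s) (exp_pos _))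
    (nonempty_of_sum_ne_zero (hx.2.symm ▸ one_ne_zero))

lemma expTilt_pos (hx : x ∈ Δ) (hxpos : ∀ r, 0 < x r) (r : Fin m) : 0 < expTilt x y r :=
  div_pos (mul_pos (hxpos r) (exp_pos _)) (sum_mul_exp_pos y hx hxpos)

lemma expTilt_mem_stdSimplex (hx : x ∈ Δ) (hxpos : ∀ r, 0 < x r) : expTilt x y ∈ Δ :=
  ⟨fun r ↦ (expTilt_pos y hx hxpos r).le, by
    simp only [expTilt]
    rw [← sum_div, div_self (sum_mul_exp_pos y hx hxpos).ne']⟩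

/-- The Gibbs variational identity. -/
lemma sum_mul_sub_klR_eq_log_sub_klR_expTilt (hx : x ∈ Δ) (hxpos : ∀ r, 0 < x r)
    {u : Fin m → ℝ} (hu : ∑ r, u r = 1) :
    ∑ r, y r * u r - klR u x = log (∑ s, x s * exp (y s)) - klR u (expTilt x y) := by
  set Z := ∑ s, x s * exp (y s)
  have hZ := sum_mul_exp_pos y hx hxpos
  have hlog (r : Fin m) : u r * log (u r / x r) =
      u r * log (u r / expTilt x y r) + u r * y r - u r * log Z := by
    have hratio : expTilt x y r / x r = exp (y r) / Z := by
      simp only [expTilt, Z]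
      field_simp [(hxpos r).ne']
    rw [mul_log_div_eq_add_mul_log_div (expTilt_pos y hx hxpos r).ne' (hxpos r).ne', hratio,
      log_div (exp_pos _).ne' hZ.ne', log_exp]
    ring
  simp_rw [klR, hlog, sum_sub_distrib, sum_add_distrib, ← sum_mul, hu]
  simp_rw [mul_comm (y _)]
  ring

lemma eq_expTilt_of_isMaxOn (hx : x ∈ Δ) (hxpos : ∀ r, 0 < x r) {u : Fin m → ℝ} (hu : u ∈ Δ)
    (hmax : ∀ v ∈ Δ, ∑ r, y r * v r - klR v x ≤ ∑ r, y r * u r - klR u x) :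
    u = expTilt x y := by
  have htilt := expTilt_mem_stdSimplex y hx hxpos
  have h := hmax _ htilt
  rw [sum_mul_sub_klR_eq_log_sub_klR_expTilt y hx hxpos htilt.2,
    sum_mul_sub_klR_eq_log_sub_klR_expTilt y hx hxpos hu.2] at h
  have hself : klR (expTilt x y) (expTilt x y) = 0 :=
    sum_eq_zero fun r _ ↦ by rw [div_self (expTilt_pos y hx hxpos r).ne', log_one, mul_zero]
  exact eq_of_klR_nonpos hu htilt (expTilt_pos y hx hxpos) (by linarith)

lemma log_sum_mul_exp_le (hx : x ∈ Δ) (hxpos : ∀ r, 0 < x r) (hy : ∀ r, y r ≤ 0) :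
    log (∑ s, x s * exp (y s)) ≤ ∑ r, y r * x r + 1 / 2 * ∑ r, y r ^ 2 * x r := by
  refine (log_le_sub_one_of_pos (sum_mul_exp_pos y hx hxpos)).trans ?_
  calc ∑ s, x s * exp (y s) - 1
      ≤ ∑ s, x s * (1 + y s + y s ^ 2 / 2) - ∑ s, x s := by
        rw [hx.2]
        exact sub_le_sub_right (sum_le_sum fun s _ ↦
          mul_le_mul_of_nonneg_left (exp_le_quadratic_of_nonpos (hy s)) (hx.1 s)) 1
    _ = ∑ r, y r * x r + 1 / 2 * ∑ r, y r ^ 2 * x r := by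
        rw [mul_sum, ← sum_add_distrib, ← sum_sub_distrib]
        exact sum_congr rfl fun s _ ↦ by ring

end Tilt

section Pythagoras

variable {m : ℕ} {w z : Fin m → ℝ}

local notation "Δ" => stdSimplex ℝ (Fin m)

lemma convexComb_apply (a b : Fin m → ℝ) (t : ℝ) (r : Fin m) :
    ((1 - t) • a + t • b) r = (1 - t) * a r + t * b r := rfl

lemma klR_convexComb_eq {a b q : Fin m → ℝ} (ha : ∀ r, 0 ≤ a r) (hb : ∀ r, 0 ≤ b r)
    (hq : ∀ r, 0 < q r) {t : ℝ} (ht₀ : 0 < t) (ht₁ : t < 1) :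
    (1 - t) * klR a q + t * klR b q =
      klR ((1 - t) • a + t • b) q + (1 - t) * klR a ((1 - t) • a + t • b) +
        t * klR b ((1 - t) • a + t • b) := by
  simp only [klR, mul_sum, ← sum_add_distrib, convexComb_apply]
  exact sum_congr rfl fun r _ ↦ mul_log_div_convexComb_eq (ha r) (hb r) (hq r) ht₀ ht₁

lemma klR_convexComb_add_klR_le_of_isMinOn {X : Set (Fin m → ℝ)} (hX : Convex ℝ X)
    (hXΔ : X ⊆ Δ) {q : Fin m → ℝ} (hq : ∀ r, 0 < q r) (hmin : IsMinOn (fun x ↦ klR x q) X w)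
    (hw : w ∈ X) (hz : z ∈ X) {t : ℝ} (ht₀ : 0 < t) (ht₁ : t < 1) :
    klR z ((1 - t) • w + t • z) + klR w q ≤ klR z q := by
  set v := (1 - t) • w + t • z
  have hvX : v ∈ X := hX hw hz (by linarith) ht₀.le (by ring)
  have hwv : 0 ≤ klR w v := klR_nonneg (hXΔ hw) (hXΔ hvX) fun r hr ↦ by
    simp only [v, convexComb_apply]
    nlinarith [mul_nonneg ht₀.le ((hXΔ hz).1 r)]
  have hid := klR_convexComb_eq (hXΔ hw).1 (hXΔ hz).1 hq ht₀ ht₁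
  have hvq : klR w q ≤ klR v q := hmin hvX
  -- dividing `t * (klR z v + klR w q) ≤ t * klR z q` by `t`
  nlinarith [mul_nonneg (sub_nonneg.2 ht₁.le) hwv]

lemma pos_of_forall_klR_convexComb_le (hw : w ∈ Δ) (hz : z ∈ Δ) {C : ℝ}
    (hC : ∀ t ∈ Set.Ioo (0 : ℝ) 1, klR z ((1 - t) • w + t • z) ≤ C) {r : Fin m}
    (hzr : 0 < z r) : 0 < w r := by
  refine (hw.1 r).lt_of_ne fun hwr ↦ ?_
  -- near `t = 0` the `r`-th term `z r * log (z r / (t * z r)) = - z r * log t` exceeds `C`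
  obtain ⟨t, ht, hlog⟩ := (Eventually.and (Ioo_mem_nhdsGT one_pos)
    (tendsto_log_nhdsGT_zero.eventually_lt_atBot (-(C + z r) / z r))).exists
  have hv : (1 - t) • w + t • z ∈ Δ :=
    convex_stdSimplex ℝ _ hw hz (by linarith [ht.2]) ht.1.le (by ring)
  have hterm := mul_log_div_sub_sub_le_klR hz hv (fun s hs ↦ by
    simp only [convexComb_apply]
    nlinarith [mul_nonneg (sub_nonneg.2 ht.2.le) (hw.1 s), mul_pos ht.1 hs]) r
  rw [convexComb_apply, ← hwr, mul_zero, zero_add, div_mul_cancel_right₀ hzr.ne', log_inv]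
    at hterm
  nlinarith [hC t ht, mul_pos ht.1 hzr, (lt_div_iff₀ hzr).1 hlog]

lemma klR_le_of_forall_klR_convexComb_le (hz : ∀ r, 0 ≤ z r)
    (hzw : ∀ r, 0 < z r → 0 < w r) {C : ℝ}
    (hC : ∀ t ∈ Set.Ioo (0 : ℝ) 1, klR z ((1 - t) • w + t • z) ≤ C) : klR z w ≤ C := by
  set K := ∑ r, z r ^ 2 / w r
  have hbound : ∀ t ∈ Set.Ioo (0 : ℝ) 1, klR z w ≤ C + t * K := fun t ht ↦ by
    refine le_trans ?_ (add_le_add_left (hC t ht) _)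
    rw [klR, klR, mul_sum, ← sum_add_distrib]
    refine sum_le_sum fun r _ ↦ ?_
    rcases (hz r).eq_or_lt with hzr | hzr
    · simp [← hzr]
    · exact mul_log_div_le_mul_log_div_convexComb_add (hz r) (hzw r hzr) ht.1.le ht.2
  have hlim : Tendsto (fun t ↦ C + t * K) (𝓝[>] 0) (𝓝 C) :=
    tendsto_nhdsWithin_of_tendsto_nhds
      ((by fun_prop : Continuous fun t ↦ C + t * K).tendsto' 0 C (by simp))
  exact ge_of_tendsto hlim (eventually_of_mem (Ioo_mem_nhdsGT one_pos) hbound)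

/-- The generalized Pythagorean inequality for the KL projection `w` of `q` onto `X`. -/
theorem klR_add_klR_le_of_isMinOn {X : Set (Fin m → ℝ)} (hX : Convex ℝ X) (hXΔ : X ⊆ Δ)
    {q : Fin m → ℝ} (hq : ∀ r, 0 < q r) (hmin : IsMinOn (fun x ↦ klR x q) X w) (hw : w ∈ X)
    (hz : z ∈ X) : (∀ r, 0 < z r → 0 < w r) ∧ klR z w + klR w q ≤ klR z q := by
  have hC : ∀ t ∈ Set.Ioo (0 : ℝ) 1, klR z ((1 - t) • w + t • z) ≤ klR z q - klR w q :=
    fun t ht ↦ by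
      linarith [klR_convexComb_add_klR_le_of_isMinOn hX hXΔ hq hmin hw hz ht.1 ht.2]
  have hzw : ∀ r, 0 < z r → 0 < w r :=
    fun r ↦ pos_of_forall_klR_convexComb_le (hXΔ hw) (hXΔ hz) hC
  exact ⟨hzw, by linarith [klR_le_of_forall_klR_convexComb_le (hXΔ hz).1 hzw hC]⟩

end Pythagoras

theorem kl_two_step_mirror_descent_bound_general
    {m : ℕ}
    -- the probability simplex in ℝ^m
    (Δ : Set (Fin m → ℝ))
    (hΔ : Δ = {x | (∀ r, 0 ≤ x r) ∧ ∑ r, x r = 1})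
    (X : Set (Fin m → ℝ))
    (hXsub : X ⊆ Δ) (hXcvx : Convex ℝ X)
    -- y is coordinatewise nonpositive
    (y : Fin m → ℝ) (hy : ∀ r, y r ≤ 0)
    -- current iterate: in X, strictly positive coordinates
    (xk : Fin m → ℝ) (hxkX : xk ∈ X) (hxkpos : ∀ r, 0 < xk r)
    -- first step: xhalf = argmax over Δ of ⟨y,x⟩ − D_KL(x, x^k)
    (xhalf : Fin m → ℝ) (hxhalfΔ : xhalf ∈ Δ)
    (hxhalf : ∀ x ∈ Δ, (∑ r, y r * x r) - klR x xk ≤ (∑ r, y r * xhalf r) - klR xhalf xk)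
    -- second step: xnext = argmin over X of D_KL(x, xhalf)
    (xnext : Fin m → ℝ) (hxnextX : xnext ∈ X)
    (hxnext : ∀ x ∈ X, klE xnext xhalf ≤ klE x xhalf) :
    ∀ z ∈ X,
      klE z xnext ≤ klE z xk +
        (((∑ r, y r * (xk r - z r)) + (1 / 2) * ∑ r, (y r) ^ 2 * xk r : ℝ) : EReal) := by
  replace hΔ : Δ = stdSimplex ℝ (Fin m) := hΔ
  subst hΔ
  intro z hz
  have hxk := hXsub hxkX
  have hhalf : xhalf = expTilt xk y := eq_expTilt_of_isMaxOn y hxk hxkpos hxhalfΔ hxhalf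
  have hhalfpos : ∀ r, 0 < xhalf r := hhalf ▸ expTilt_pos y hxk hxkpos
  have hmin : IsMinOn (fun x ↦ klR x xhalf) X xnext := fun x hx ↦ show _ ≤ _ by
    simpa only [klE_eq_klR fun r _ ↦ hhalfpos r, EReal.coe_le_coe_iff] using hxnext x hx
  obtain ⟨hsupp, hpythagoras⟩ := klR_add_klR_le_of_isMinOn hXcvx hXsub hhalfpos hmin hxnextX hz
  have hgibbs := klR_nonneg (hXsub hxnextX) hxhalfΔ fun r _ ↦ hhalfpos r
  have hvariational := sum_mul_sub_klR_eq_log_sub_klR_expTilt y hxk hxkpos (hXsub hz).2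
  have hpartition := log_sum_mul_exp_le y hxk hxkpos hy
  rw [klE_eq_klR fun r hr ↦ hsupp r (((hXsub hz).1 r).lt_of_ne' hr),
    klE_eq_klR fun r _ ↦ hxkpos r, ← EReal.coe_add, EReal.coe_le_coe_iff]
  simp only [mul_sub, sum_sub_distrib]
  rw [← hhalf] at hvariational
  linarith

/-- the two-step KL mirror-descent update satisfies
`D_KL(z, x^{k+1}) − D_KL(z, x^k) ≤ ⟨y, x^k − z⟩ + ½⟨y², x^k⟩` for every `z ∈ X`. -/
theorem kl_two_step_mirror_descent_bound
    {m : ℕ}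
    -- the probability simplex in ℝ^m
    (Δ : Set (Fin m → ℝ))
    (hΔ : Δ = {x | (∀ r, 0 ≤ x r) ∧ ∑ r, x r = 1})
    (X : Set (Fin m → ℝ))
    (hXsub : X ⊆ Δ) (hXne : X.Nonempty) (hXcpt : IsCompact X) (hXcvx : Convex ℝ X)
    -- y is coordinatewise nonpositive
    (y : Fin m → ℝ) (hy : ∀ r, y r ≤ 0)
    -- current iterate: in X, strictly positive coordinates
    (xk : Fin m → ℝ) (hxkX : xk ∈ X) (hxkpos : ∀ r, 0 < xk r)
    -- first step: xhalf = argmax over Δ of ⟨y,x⟩ − D_KL(x, x^k)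
    (xhalf : Fin m → ℝ) (hxhalfΔ : xhalf ∈ Δ)
    (hxhalf : ∀ x ∈ Δ, (∑ r, y r * x r) - klR x xk ≤ (∑ r, y r * xhalf r) - klR xhalf xk)
    -- second step: xnext = argmin over X of D_KL(x, xhalf)
    (xnext : Fin m → ℝ) (hxnextX : xnext ∈ X)
    (hxnext : ∀ x ∈ X, klE xnext xhalf ≤ klE x xhalf) :
    ∀ z ∈ X,
      klE z xnext ≤ klE z xk +
        (((∑ r, y r * (xk r - z r)) + (1 / 2) * ∑ r, (y r) ^ 2 * xk r : ℝ) : EReal) :=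
  kl_two_step_mirror_descent_bound_general Δ hΔ X hXsub hXcvx y hy xk hxkX hxkpos xhalf hxhalfΔ
    hxhalf xnext hxnextX hxnext
end
end

section
/- Let X ⊆ ℝ^m be a nonempty convex compact set and h : X → ℝ a continuous function. Let (Y^k)_{k≥1} ⊆ ℝ^m, let ρ^k ∈ argmax_{x∈X}{⟨x, Y^k⟩ − h(x)}, and let (w^k)_{k≥1} be positive reals with w^k → ∞. If ρ^k → ρ* and Y^{k+1}/w^k → v* as k → ∞, then ⟨v*, ρ̂ − ρ*⟩ ≤ 0 for every ρ̂ ∈ X; that is, ρ* solves the variational inequality associated with v* over X. -/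
open scoped BigOperators RealInnerProductSpace
open Finset Filter

noncomputable section

/-- if the dual-averaging iterates `ρ^k ∈ argmax_{x∈X}(⟨x,Y^k⟩ − h(x))`
converge to `ρ*` and `Y^{k+1}/w^k → v*` with `w^k → ∞`, then `ρ*` solves the
variational inequality `⟨v*, ρ̂ − ρ*⟩ ≤ 0` for all `ρ̂ ∈ X`. -/
theorem limit_of_dual_averaging_solves_VI
    {m : ℕ} (X : Set (EuclideanSpace ℝ (Fin m)))
    (hXne : X.Nonempty) (hXcvx : Convex ℝ X) (hXcpt : IsCompact X)
    (h : EuclideanSpace ℝ (Fin m) → ℝ) (hcont : ContinuousOn h X)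
    (Y : ℕ → EuclideanSpace ℝ (Fin m))
    (ρ : ℕ → EuclideanSpace ℝ (Fin m))
    (hρ : ∀ k, 1 ≤ k → ρ k ∈ X ∧ ∀ x ∈ X, ⟪x, Y k⟫ - h x ≤ ⟪ρ k, Y k⟫ - h (ρ k))
    (w : ℕ → ℝ) (hw : ∀ k, 1 ≤ k → 0 < w k)
    (hwtop : Tendsto w atTop atTop)
    (ρstar vstar : EuclideanSpace ℝ (Fin m))
    (hρlim : Tendsto ρ atTop (nhds ρstar))
    (hYlim : Tendsto (fun k => (w k)⁻¹ • Y (k + 1)) atTop (nhds vstar)) :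
    ∀ ρhat ∈ X, ⟪vstar, ρhat - ρstar⟫ ≤ 0 := by
  intro ρhat hhat
  -- bound on h over X
  obtain ⟨M, hM⟩ := hXcpt.exists_bound_of_continuousOn hcont
  -- limit of inner products
  have hρlim' : Tendsto (fun k => ρ (k + 1)) atTop (nhds ρstar) :=
    hρlim.comp (tendsto_add_atTop_nat 1)
  have hfin : Tendsto (fun k => ⟪(w k)⁻¹ • Y (k + 1), ρhat - ρ (k + 1)⟫)
      atTop (nhds ⟪vstar, ρhat - ρstar⟫) :=
    hYlim.inner (tendsto_const_nhds.sub hρlim')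
  have hg : Tendsto (fun k => (w k)⁻¹ * (h ρhat - h (ρ (k + 1)))) atTop (nhds 0) := by
    apply squeeze_zero_norm' (a := fun k => (w k)⁻¹ * (|M| + |M|))
    · filter_upwards [hwtop.eventually_ge_atTop 1, eventually_ge_atTop 1] with k hk hk1
      have hwk : 0 < w k := hw k hk1
      have hρX : ρ (k + 1) ∈ X := (hρ (k + 1) (by omega)).1
      have h1 : |h ρhat - h (ρ (k + 1))| ≤ |M| + |M| := by
        calc |h ρhat - h (ρ (k + 1))| ≤ ‖h ρhat‖ + ‖h (ρ (k + 1))‖ := by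
              rw [← Real.norm_eq_abs]; exact norm_sub_le _ _
        _ ≤ |M| + |M| := add_le_add ((hM _ hhat).trans (le_abs_self M))
            ((hM _ hρX).trans (le_abs_self M))
      have : ‖(w k)⁻¹ * (h ρhat - h (ρ (k + 1)))‖
          = (w k)⁻¹ * |h ρhat - h (ρ (k + 1))| := by
        rw [norm_mul, Real.norm_eq_abs, Real.norm_eq_abs, abs_of_pos (inv_pos.mpr hwk)]
      rw [this]
      exact mul_le_mul_of_nonneg_left h1 (inv_pos.mpr hwk).le
    · have := hwtop.inv_tendsto_atTop
      simpa using this.mul_const (|M| + |M|)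
  refine le_of_tendsto_of_tendsto hfin hg ?_
  filter_upwards [eventually_ge_atTop 1] with k hk1
  have hwk : 0 < w k := hw k hk1
  have hineq := (hρ (k + 1) (by omega)).2 ρhat hhat
  have key : ⟪Y (k + 1), ρhat - ρ (k + 1)⟫ ≤ h ρhat - h (ρ (k + 1)) := by
    have := hineq
    rw [real_inner_comm (Y (k+1)) ρhat, real_inner_comm (Y (k+1)) (ρ (k+1))] at this
    rw [inner_sub_right]
    linarith
  have : ⟪(w k)⁻¹ • Y (k + 1), ρhat - ρ (k + 1)⟫
      = (w k)⁻¹ * ⟪Y (k + 1), ρhat - ρ (k + 1)⟫ := real_inner_smul_left _ _ _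
  rw [this]
  exact mul_le_mul_of_nonneg_left key (inv_pos.mpr hwk).le
end
end

section
/- Suppose the virtual game is socially concave with weights λ_1,…,λ_n > 0: the function ρ ↦ Σ_{i=1}^n λ_i V_i(ρ) is concave on P, and for every i and every fixed ρ_i ∈ P_i the function ρ_{-i} ↦ V_i(ρ_i, ρ_{-i}) is convex on ∏_{j≠i} P_j. Let ρ^1,…,ρ^k ∈ P, let c_1,…,c_k ≥ 0 with Σ_ℓ c_ℓ = 1, and set ρ̄ = Σ_{ℓ=1}^k c_ℓ ρ^ℓ. Then for every θ ∈ P: Σ_{i=1}^n λ_i [V_i(θ_i, ρ̄_{-i}) − V_i(ρ̄)] ≤ Σ_{ℓ=1}^k c_ℓ Σ_{i=1}^n λ_i [V_i(θ_i, ρ^ℓ_{-i}) − V_i(ρ^ℓ)]. -/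
open scoped BigOperators
open Finset

noncomputable section

/-!
The weighted Nikaido–Isoda function `ρ ↦ ∑ i, λ_i [V_i(θ_i, ρ_{-i}) − V_i(ρ)]` is the difference of
the convex function `ρ ↦ ∑ i, λ_i V_i(θ_i, ρ_{-i})` and the concave function `ρ ↦ ∑ i, λ_i V_i(ρ)`,
hence convex on `P`; the bound is Jensen's inequality for it.
-/

theorem convexOn_finset_sum {𝕜 E β ι : Type*} [Semiring 𝕜] [PartialOrder 𝕜] [AddCommMonoid E]
    [AddCommMonoid β] [PartialOrder β] [IsOrderedAddMonoid β] [SMul 𝕜 E] [Module 𝕜 β]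
    [PosSMulMono 𝕜 β] {s : Set E} (hs : Convex 𝕜 s) (t : Finset ι) {f : ι → E → β}
    (hf : ∀ i ∈ t, ConvexOn 𝕜 s (f i)) :
    ConvexOn 𝕜 s (fun x => ∑ i ∈ t, f i x) := by
  simp_rw [← Finset.sum_apply]
  exact Finset.sum_induction f (ConvexOn 𝕜 s) (fun _ _ => ConvexOn.add) (convexOn_const 0 hs) hf

def nikaidoIsoda {n : ℕ} {S A : Fin n → Type*} [∀ j, Fintype (S j)]
    [∀ j, Fintype (A j)] (r : Fin n → (∀ j, S j) → (∀ j, A j) → ℝ) (lam : Fin n → ℝ)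
    (θ ρ : ∀ j, S j × A j → ℝ) : ℝ :=
  ∑ i, lam i * (payoff (r i) (Function.update ρ i (θ i)) - payoff (r i) ρ)

theorem convexOn_nikaidoIsoda {n : ℕ} {S A : Fin n → Type*} [∀ j, Fintype (S j)]
    [∀ j, Fintype (A j)] {r : Fin n → (∀ j, S j) → (∀ j, A j) → ℝ} {lam : Fin n → ℝ}
    {s : Set (∀ j, S j × A j → ℝ)} {θ : ∀ j, S j × A j → ℝ} (hlam : ∀ i, 0 ≤ lam i)
    (hconc : ConcaveOn ℝ s (fun ρ => ∑ i, lam i * payoff (r i) ρ))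
    (hconv : ∀ i, ConvexOn ℝ s (fun ρ => payoff (r i) (Function.update ρ i (θ i)))) :
    ConvexOn ℝ s (nikaidoIsoda r lam θ) := by
  have hdev : ConvexOn ℝ s (fun ρ => ∑ i, lam i * payoff (r i) (Function.update ρ i (θ i))) :=
    convexOn_finset_sum hconc.1 _ fun i _ => (hconv i).smul (hlam i)
  have hsplit : nikaidoIsoda r lam θ =
      (fun ρ => ∑ i, lam i * payoff (r i) (Function.update ρ i (θ i))) -
        fun ρ => ∑ i, lam i * payoff (r i) ρ := by
    ext ρ
    simp only [nikaidoIsoda, Pi.sub_apply, mul_sub, Finset.sum_sub_distrib]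
  rw [hsplit]
  exact hdev.sub hconc

theorem socially_concave_averaging_bound_general
    {n : ℕ} {S A : Fin n → Type*}
    [∀ j, Fintype (S j)]
    [∀ j, Fintype (A j)]
    (r : ∀ _ : Fin n, (∀ j, S j) → (∀ j, A j) → ℝ)
    (P : ∀ i : Fin n, Set ((S i × A i) → ℝ))
    (lam : Fin n → ℝ) (hlam : ∀ i, 0 < lam i)
    -- social concavity: ∑ λ_i V_i is concave on P
    (hconc : ConcaveOn ℝ {ρ : ∀ j, S j × A j → ℝ | ∀ j, ρ j ∈ P j}
      (fun ρ => ∑ i, lam i * payoff (r i) ρ))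
    -- and for each i and fixed ρ_i ∈ P_i, V_i(ρ_i, ·) is convex in the others' play
    (hconv : ∀ i : Fin n, ∀ ρi ∈ P i,
      ConvexOn ℝ {ρ : ∀ j, S j × A j → ℝ | ∀ j, ρ j ∈ P j}
        (fun ρ => payoff (r i) (Function.update ρ i ρi)))
    -- a convex combination of profiles in P
    (k : ℕ) (ρ : Fin k → ∀ j, S j × A j → ℝ)
    (hρ : ∀ ℓ j, ρ ℓ j ∈ P j)
    (c : Fin k → ℝ) (hc0 : ∀ ℓ, 0 ≤ c ℓ) (hc1 : ∑ ℓ, c ℓ = 1)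
    (ρbar : ∀ j, S j × A j → ℝ) (hρbar : ρbar = ∑ ℓ, c ℓ • ρ ℓ) :
    ∀ θ : ∀ j, S j × A j → ℝ, (∀ j, θ j ∈ P j) →
      ∑ i, lam i * (payoff (r i) (Function.update ρbar i (θ i)) - payoff (r i) ρbar) ≤
        ∑ ℓ, c ℓ * ∑ i, lam i *
          (payoff (r i) (Function.update (ρ ℓ) i (θ i)) - payoff (r i) (ρ ℓ)) := by
  intro θ hθ
  have hconvex := convexOn_nikaidoIsoda (θ := θ) (fun i => (hlam i).le) hconc
    fun i => hconv i (θ i) (hθ i)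
  subst hρbar
  exact hconvex.map_sum_le (fun ℓ _ => hc0 ℓ) hc1 fun ℓ _ j => hρ ℓ j

/-- in a socially concave virtual game, for any convex combination
`ρ̄ = ∑_ℓ c_ℓ ρ^ℓ` of profiles in `P` and any `θ ∈ P`,
`∑_i λ_i [V_i(θ_i, ρ̄_{-i}) − V_i(ρ̄)] ≤ ∑_ℓ c_ℓ ∑_i λ_i [V_i(θ_i, ρ^ℓ_{-i}) − V_i(ρ^ℓ)]`. -/
theorem socially_concave_averaging_bound
    {n : ℕ} {S A : Fin n → Type*}
    [∀ j, Fintype (S j)] [∀ j, Nonempty (S j)]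
    [∀ j, Fintype (A j)] [∀ j, Nonempty (A j)]
    (r : ∀ _ : Fin n, (∀ j, S j) → (∀ j, A j) → ℝ)
    (P : ∀ i : Fin n, Set ((S i × A i) → ℝ))
    (hPne : ∀ i, (P i).Nonempty) (hPcpt : ∀ i, IsCompact (P i))
    (hPcvx : ∀ i, Convex ℝ (P i)) (hPsub : ∀ i, P i ⊆ probSimplex (S i × A i))
    (lam : Fin n → ℝ) (hlam : ∀ i, 0 < lam i)
    -- social concavity: ∑ λ_i V_i is concave on P
    (hconc : ConcaveOn ℝ {ρ : ∀ j, S j × A j → ℝ | ∀ j, ρ j ∈ P j}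
      (fun ρ => ∑ i, lam i * payoff (r i) ρ))
    -- and for each i and fixed ρ_i ∈ P_i, V_i(ρ_i, ·) is convex in the others' play
    (hconv : ∀ i : Fin n, ∀ ρi ∈ P i,
      ConvexOn ℝ {ρ : ∀ j, S j × A j → ℝ | ∀ j, ρ j ∈ P j}
        (fun ρ => payoff (r i) (Function.update ρ i ρi)))
    -- a convex combination of profiles in P
    (k : ℕ) (ρ : Fin k → ∀ j, S j × A j → ℝ)
    (hρ : ∀ ℓ j, ρ ℓ j ∈ P j)
    (c : Fin k → ℝ) (hc0 : ∀ ℓ, 0 ≤ c ℓ) (hc1 : ∑ ℓ, c ℓ = 1)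
    (ρbar : ∀ j, S j × A j → ℝ) (hρbar : ρbar = ∑ ℓ, c ℓ • ρ ℓ) :
    ∀ θ : ∀ j, S j × A j → ℝ, (∀ j, θ j ∈ P j) →
      ∑ i, lam i * (payoff (r i) (Function.update ρbar i (θ i)) - payoff (r i) ρbar) ≤
        ∑ ℓ, c ℓ * ∑ i, lam i *
          (payoff (r i) (Function.update (ρ ℓ) i (θ i)) - payoff (r i) (ρ ℓ)) :=
  socially_concave_averaging_bound_general r P lam hlam hconc hconv k ρ hρ c hc0 hc1 ρbar hρbar
end
end

section
/- Assume the dual-averaging setup with gradient-estimate assumptions, with step sizes satisfying Σ_{ℓ=1}^∞ η^ℓ = ∞ and Σ_{ℓ=1}^∞ (η^ℓ)² < ∞, and with bias level β ≤ ε/(6n Σ_{i=1}^n |S_i||A_i|) for a given ε > 0. Then almost surely there exists K₀ such that for all k ≥ K₀: max_{θ ∈ P^δ} Σ_{ℓ=1}^k (η^ℓ/w^k) Ψ(θ, ρ^ℓ) < ε/2. -/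
open scoped BigOperators
open Finset MeasureTheory Filter

noncomputable section

open Classical in
/-- The own-gradient vector `v_i(ρ_{-i})`. -/
def ownGrad {n : ℕ} {S A : Fin n → Type*} [∀ j, Fintype (S j)] [∀ j, Fintype (A j)]
    (ri : (∀ j, S j) → (∀ j, A j) → ℝ) (i : Fin n) (ρ : ∀ j, S j × A j → ℝ) :
    S i × A i → ℝ :=
  fun p => payoff ri (Function.update ρ i (fun q => if q = p then (1:ℝ) else 0))

/-- The Nikaido–Isoda function of the virtual game. -/
def NI {n : ℕ} {S A : Fin n → Type*} [∀ j, Fintype (S j)] [∀ j, Fintype (A j)]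
    (r : ∀ _ : Fin n, (∀ j, S j) → (∀ j, A j) → ℝ) (θ ρ : ∀ j, S j × A j → ℝ) : ℝ :=
  ∑ i, (payoff (r i) (Function.update ρ i (θ i)) - payoff (r i) ρ)


/-!
Each player runs dual averaging on its own strategy set, and the Nikaido–Isoda gap is linear in
the deviation `θ`: `Ψ(θ, ρ) = ∑ᵢ ⟪θᵢ - ρᵢ, vᵢ(ρ₋ᵢ)⟫`. Split `vᵢ = Rᵢ + (E Rᵢ - Rᵢ) + (vᵢ - E Rᵢ)`.
For the first part, the be-the-leader argument with a `K`-strongly convex regularizer bounds the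
regret by the oscillation of `hᵢ` plus `(2/K) ∑ (ηˡ)² ‖Rᵢˡ‖²`, which converges almost surely because
its expectation does. The second part is a martingale transform with predictable weights in
`[0, 1]` (the iterates are continuous functions of the `F^{ℓ-1}`-measurable scores) and
square-summable steps; it is bounded in `L²`, hence converges almost surely. The bias contributes
at most `2β` per unit step. Dividing by `wᵏ → ∞` leaves at most `2nβ ≤ ε/3 < ε/2`.
-/

open Topology

lemma tendsto_sum_Icc_one_of_summable {f : ℕ → ℝ} (hf : Summable fun j => f (j + 1)) :
    Tendsto (fun k => ∑ ℓ ∈ Icc 1 k, f ℓ) atTop (𝓝 (∑' j, f (j + 1))) :=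
  hf.hasSum.tendsto_sum_nat.congr fun k => by
    induction k <;> simp_all [sum_range_succ, sum_Icc_succ_top]

lemma eventually_div_lt_of_tendsto {a w : ℕ → ℝ} {L c d : ℝ} (ha : Tendsto a atTop (𝓝 L))
    (hw : Tendsto w atTop atTop) (hcd : c < d) :
    ∀ᶠ k in atTop, ∀ x, x ≤ a k + c * w k → x / w k < d := by
  filter_upwards [(ha.div_atTop hw).eventually (gt_mem_nhds (sub_pos.2 hcd)),
    hw.eventually_gt_atTop 0] with k hak hwk x hx
  calc x / w k ≤ (a k + c * w k) / w k := div_le_div_of_nonneg_right hx hwk.le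
    _ = a k / w k + c := by field_simp
    _ < d := by linarith

lemma two_mul_mul_lt_half_of_le_div {n N : ℕ} {β ε : ℝ} (hε : 0 < ε)
    (hβ : β ≤ ε / (6 * n * N)) : 2 * n * β < ε / 2 := by
  have hmid : 2 * n * (ε / (6 * n * N)) ≤ ε / 3 := by
    rcases n.eq_zero_or_pos with rfl | hn
    · simp only [CharP.cast_eq_zero, mul_zero, zero_mul]; positivity
    rcases N.eq_zero_or_pos with rfl | hN
    · simp only [CharP.cast_eq_zero, mul_zero, div_zero]; positivity
    have hN1 : (1 : ℝ) ≤ N := by exact_mod_cast hN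
    have hn0 : (0 : ℝ) < n := by exact_mod_cast hn
    rw [show 2 * n * (ε / (6 * n * N)) = ε / 3 / N by field_simp; ring]
    exact div_le_self (by positivity) hN1
  calc 2 * n * β ≤ 2 * n * (ε / (6 * n * N)) := mul_le_mul_of_nonneg_left hβ (by positivity)
    _ < ε / 2 := by linarith

lemma sep_forall_le_eq_inter_iInter {ι : Type*} (P : Set (ι → ℝ)) (δ : ℝ) :
    {x ∈ P | ∀ p, δ ≤ x p} = P ∩ ⋂ p, {x | δ ≤ x p} := by
  ext; simp

lemma IsCompact.sep_forall_le {ι : Type*} {P : Set (ι → ℝ)} (hP : IsCompact P) (δ : ℝ) :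
    IsCompact {x ∈ P | ∀ p, δ ≤ x p} := by
  rw [sep_forall_le_eq_inter_iInter]
  exact hP.inter_right (isClosed_iInter fun p => isClosed_le continuous_const (continuous_apply p))

lemma Convex.sep_forall_le {ι : Type*} {P : Set (ι → ℝ)} (hP : Convex ℝ P) (δ : ℝ) :
    Convex ℝ {x ∈ P | ∀ p, δ ≤ x p} := by
  rw [sep_forall_le_eq_inter_iInter]
  exact hP.inter (convex_iInter fun p =>
    convex_halfSpace_ge (f := fun x : ι → ℝ => x p) (LinearMap.proj p).isLinear δ)

lemma continuous_of_sum_sq_sub_le {X : Type*} [Fintype X] {f : (X → ℝ) → X → ℝ} {c : ℝ} (hc : 0 ≤ c)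
    (hf : ∀ Y Y', ∑ p, (f Y' p - f Y p) ^ 2 ≤ c ^ 2 * ∑ p, (Y' p - Y p) ^ 2) :
    Continuous f := by
  let e := EuclideanSpace.equiv X ℝ
  have hlip : LipschitzWith c.toNNReal (e.symm ∘ f ∘ e) := by
    refine LipschitzWith.of_dist_le_mul fun Y' Y => ?_
    simp only [EuclideanSpace.dist_eq, Real.dist_eq, sq_abs, Real.coe_toNNReal _ hc]
    rw [← Real.sqrt_sq hc, ← Real.sqrt_mul (sq_nonneg c)]
    exact Real.sqrt_le_sqrt (hf _ _)
  have : f = e ∘ (e.symm ∘ f ∘ e) ∘ e.symm := by ext; simp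
  rw [this]
  exact e.continuous.comp (hlip.continuous.comp e.symm.continuous)

namespace MeasureTheory

open ProbabilityTheory

variable {Ω : Type*} {m m0 : MeasurableSpace Ω} {μ : Measure Ω}

lemma integral_le_of_ae_condExp_le [IsProbabilityMeasure μ] (hm : m ≤ m0) {f : Ω → ℝ} {B : ℝ}
    (hB : ∀ᵐ ω ∂μ, μ[f | m] ω ≤ B) : ∫ ω, f ω ∂μ ≤ B :=
  calc ∫ ω, f ω ∂μ = ∫ ω, μ[f | m] ω ∂μ := (integral_condExp hm).symm
    _ ≤ ∫ _, B ∂μ := integral_mono_ae integrable_condExp (integrable_const B) hB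
    _ = B := by simp

lemma ae_summable_of_integral_le {f : ℕ → Ω → ℝ} {b : ℕ → ℝ} (hf0 : ∀ n ω, 0 ≤ f n ω)
    (hf : ∀ n, Integrable (f n) μ) (hfb : ∀ n, ∫ ω, f n ω ∂μ ≤ b n) (hb : Summable b) :
    ∀ᵐ ω ∂μ, Summable fun n => f n ω := by
  have hb0 : ∀ n, 0 ≤ b n := fun n => (integral_nonneg (hf0 n)).trans (hfb n)
  have hnorm : ∀ n, eLpNorm (f n) 1 μ ≤ ENNReal.ofReal (b n) := fun n => by
    rw [eLpNorm_one_eq_lintegral_enorm, ← ofReal_integral_norm_eq_lintegral_enorm (hf n)]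
    exact ENNReal.ofReal_le_ofReal <| by simpa [Real.norm_of_nonneg (hf0 n _)] using hfb n
  have hfin : ∑' n, eLpNorm (f n) 1 μ ≠ ⊤ :=
    ne_top_of_le_ne_top (ENNReal.ofReal_tsum_of_nonneg hb0 hb ▸ ENNReal.ofReal_ne_top)
      (ENNReal.tsum_le_tsum hnorm)
  filter_upwards [summable_norm_of_tsum_eLpNorm_ne_top le_rfl
    (fun n => (hf n).aestronglyMeasurable) hfin] with ω hω
  exact hω.of_norm

lemma integral_sq_sub_condExp_le [IsFiniteMeasure μ] (hm : m ≤ m0) {f : Ω → ℝ}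
    (hf : MemLp f 2 μ) : ∫ ω, (f ω - μ[f | m] ω) ^ 2 ∂μ ≤ ∫ ω, f ω ^ 2 ∂μ :=
  calc ∫ ω, (f ω - μ[f | m] ω) ^ 2 ∂μ = ∫ ω, Var[f; μ | m] ω ∂μ := (integral_condExp hm).symm
    _ ≤ ∫ ω, μ[f ^ 2 | m] ω ∂μ :=
      integral_mono_ae integrable_condVar integrable_condExp (condVar_ae_le_condExp_sq hm hf)
    _ = ∫ ω, f ω ^ 2 ∂μ := integral_condExp hm

lemma condExp_mul_sub_condExp_ae_eq_zero [IsFiniteMeasure μ] (hm : m ≤ m0) {c f : Ω → ℝ}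
    {C : ℝ} (hc : StronglyMeasurable[m] c) (hcC : ∀ ω, |c ω| ≤ C) (hf : Integrable f μ) :
    μ[c * (f - μ[f | m]) | m] =ᵐ[μ] 0 := by
  have hξ : Integrable (f - μ[f | m]) μ := hf.sub integrable_condExp
  filter_upwards [condExp_mul_of_stronglyMeasurable_left hc
      (hξ.bdd_mul (hc.mono hm).aestronglyMeasurable (ae_of_all _ hcC)) hξ,
    condExp_sub hf integrable_condExp m] with ω hmul hsub
  rw [hmul, Pi.mul_apply, hsub, Pi.sub_apply,
    condExp_of_stronglyMeasurable hm stronglyMeasurable_condExp integrable_condExp]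
  simp

section Martingale

variable {F : Filtration ℕ m0} {M : ℕ → Ω → ℝ}

lemma Martingale.integral_sq_succ [IsFiniteMeasure μ] (hM : Martingale M F μ)
    (hM2 : ∀ n, MemLp (M n) 2 μ) (n : ℕ) :
    ∫ ω, M (n + 1) ω ^ 2 ∂μ = ∫ ω, M n ω ^ 2 ∂μ + ∫ ω, (M (n + 1) ω - M n ω) ^ 2 ∂μ := by
  have hd2 : MemLp (M (n + 1) - M n) 2 μ := (hM2 (n + 1)).sub (hM2 n)
  have hcross_int : Integrable (M n * (M (n + 1) - M n)) μ := (hM2 n).integrable_mul hd2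
  -- the increment is orthogonal to `M n`, because its conditional expectation vanishes
  have hcross : ∫ ω, M n ω * (M (n + 1) ω - M n ω) ∂μ = 0 := by
    have hd0 : μ[M (n + 1) - M n | F n] =ᵐ[μ] 0 := by
      filter_upwards [condExp_sub (hM.integrable (n + 1)) (hM.integrable n) (F n),
        hM.condExp_ae_eq n.le_succ] with ω h1 h2
      rw [h1, Pi.sub_apply, h2, condExp_of_stronglyMeasurable (F.le n)
        (hM.stronglyMeasurable n) (hM.integrable n)]
      simp
    calc ∫ ω, M n ω * (M (n + 1) ω - M n ω) ∂μ
        = ∫ ω, μ[M n * (M (n + 1) - M n) | F n] ω ∂μ := (integral_condExp (F.le n)).symm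
      _ = ∫ ω, (0 : ℝ) ∂μ := integral_congr_ae <| by
          filter_upwards [condExp_mul_of_stronglyMeasurable_left (hM.stronglyMeasurable n)
            hcross_int (hd2.integrable one_le_two), hd0] with ω h1 h2
          simp [h1, h2]
      _ = 0 := integral_zero _ _
  have hsplit : (fun ω => M (n + 1) ω ^ 2)
      = fun ω => M n ω ^ 2 + 2 * (M n ω * (M (n + 1) ω - M n ω)) + (M (n + 1) ω - M n ω) ^ 2 := by
    funext ω; ring
  have h1 : Integrable (fun ω => M n ω ^ 2) μ := (hM2 n).integrable_sq
  have h2 : Integrable (fun ω => 2 * (M n ω * (M (n + 1) ω - M n ω))) μ :=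
    hcross_int.const_mul 2
  have h3 : Integrable (fun ω => (M (n + 1) ω - M n ω) ^ 2) μ := hd2.integrable_sq
  have h12 : Integrable (fun ω => M n ω ^ 2 + 2 * (M n ω * (M (n + 1) ω - M n ω))) μ :=
    h1.add h2
  rw [hsplit, integral_add h12 h3, integral_add h1 h2, integral_const_mul, hcross]
  ring

lemma Martingale.integral_sq_eq [IsFiniteMeasure μ] (hM : Martingale M F μ)
    (hM2 : ∀ n, MemLp (M n) 2 μ) (n : ℕ) :
    ∫ ω, M n ω ^ 2 ∂μ
      = ∫ ω, M 0 ω ^ 2 ∂μ + ∑ i ∈ range n, ∫ ω, (M (i + 1) ω - M i ω) ^ 2 ∂μ := by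
  induction n with
  | zero => simp
  | succ n ih => rw [hM.integral_sq_succ hM2, ih, sum_range_succ, add_assoc]

/-- Orthogonality of the increments keeps `M` bounded in `L²`, hence in `L¹`. -/
lemma Martingale.exists_ae_tendsto_of_summable_integral_sq [IsProbabilityMeasure μ]
    (hM : Martingale M F μ) (hM2 : ∀ n, MemLp (M n) 2 μ)
    (hsum : Summable fun n => ∫ ω, (M (n + 1) ω - M n ω) ^ 2 ∂μ) :
    ∀ᵐ ω ∂μ, ∃ c, Tendsto (fun n => M n ω) atTop (𝓝 c) := by
  set V := ∫ ω, M 0 ω ^ 2 ∂μ + ∑' n, ∫ ω, (M (n + 1) ω - M n ω) ^ 2 ∂μ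
  have hV : ∀ n, ∫ ω, M n ω ^ 2 ∂μ ≤ V := fun n => by
    rw [hM.integral_sq_eq hM2]
    exact add_le_add_right (hsum.sum_le_tsum _ fun i _ => integral_nonneg fun _ => sq_nonneg _) _
  refine hM.submartingale.exists_ae_tendsto_of_bdd (R := ((1 + V) / 2).toNNReal) fun n => ?_
  rw [eLpNorm_one_eq_lintegral_enorm, ← ofReal_integral_norm_eq_lintegral_enorm
    (hM.integrable n), ENNReal.ofNNReal_toNNReal]
  refine ENNReal.ofReal_le_ofReal ?_
  calc ∫ ω, ‖M n ω‖ ∂μ ≤ ∫ ω, (1 + M n ω ^ 2) / 2 ∂μ :=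
        integral_mono (hM.integrable n).norm
          (((integrable_const 1).add (hM2 n).integrable_sq).div_const 2) fun ω => by
            rw [Real.norm_eq_abs]
            nlinarith [sq_nonneg (|M n ω| - 1), sq_abs (M n ω)]
    _ = (1 + ∫ ω, M n ω ^ 2 ∂μ) / 2 := by
        rw [integral_div, integral_add (integrable_const 1) (hM2 n).integrable_sq]
        simp
    _ ≤ (1 + V) / 2 := by linarith [hV n]

end Martingale

lemma ae_exists_tendsto_sum_Icc_of_condExp_eq_zero [IsProbabilityMeasure μ]
    {F : Filtration ℕ m0} {d : ℕ → Ω → ℝ} (hdF : ∀ ℓ, 1 ≤ ℓ → StronglyMeasurable[F ℓ] (d ℓ))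
    (hd2 : ∀ ℓ, 1 ≤ ℓ → MemLp (d ℓ) 2 μ) (hd0 : ∀ n, μ[d (n + 1) | F n] =ᵐ[μ] 0)
    (hsum : Summable fun n => ∫ ω, d (n + 1) ω ^ 2 ∂μ) :
    ∀ᵐ ω ∂μ, ∃ L, Tendsto (fun k => ∑ ℓ ∈ Icc 1 k, d ℓ ω) atTop (𝓝 L) := by
  set M : ℕ → Ω → ℝ := fun k ω => ∑ ℓ ∈ Icc 1 k, d ℓ ω
  have hMsucc : ∀ n, M (n + 1) - M n = d (n + 1) := fun n => by
    funext ω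
    simp [M, sum_Icc_succ_top (show 1 ≤ n + 1 by omega)]
  have hM2 : ∀ n, MemLp (M n) 2 μ := fun n => by
    simpa [M, ← Finset.sum_apply] using
      memLp_finsetSum' (Icc 1 n) fun ℓ hℓ => hd2 ℓ (mem_Icc.1 hℓ).1
  have hMart : Martingale M F μ :=
    martingale_of_condExp_sub_eq_zero_nat
      (fun n => stronglyMeasurable_fun_sum _ fun ℓ hℓ =>
        (hdF ℓ (mem_Icc.1 hℓ).1).mono (F.mono (mem_Icc.1 hℓ).2))
      (fun n => (hM2 n).integrable one_le_two) fun n => by rw [hMsucc]; exact hd0 n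
  refine hMart.exists_ae_tendsto_of_summable_integral_sq hM2 (hsum.congr fun n => ?_)
  simp only [← Pi.sub_apply, hMsucc]

lemma ae_tendsto_sum_mul_sub_condExp [IsProbabilityMeasure μ] (F : Filtration ℕ m0)
    {g c : ℕ → Ω → ℝ} {η : ℕ → ℝ} {B : ℝ} (hg : ∀ k, StronglyMeasurable[F k] (g k))
    (hg2 : ∀ k, MemLp (g k) 2 μ) (hgB : ∀ k, 1 ≤ k → ∫ ω, g k ω ^ 2 ∂μ ≤ B)
    (hc : ∀ k, 1 ≤ k → StronglyMeasurable[F (k - 1)] (c k))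
    (hc1 : ∀ k, 1 ≤ k → ∀ ω, |c k ω| ≤ 1) (hη : Summable fun k => η k ^ 2) :
    ∀ᵐ ω ∂μ, ∃ L, Tendsto
      (fun k => ∑ ℓ ∈ Icc 1 k, η ℓ * c ℓ ω * (g ℓ ω - μ[g ℓ | F (ℓ - 1)] ω)) atTop (𝓝 L) := by
  set d : ℕ → Ω → ℝ := fun ℓ ω => η ℓ * c ℓ ω * (g ℓ ω - μ[g ℓ | F (ℓ - 1)] ω)
  have hξ2 : ∀ ℓ, MemLp (g ℓ - μ[g ℓ | F (ℓ - 1)]) 2 μ :=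
    fun ℓ => (hg2 ℓ).sub ((hg2 ℓ).condExp one_le_two)
  have hdF : ∀ ℓ, 1 ≤ ℓ → StronglyMeasurable[F ℓ] (d ℓ) := fun ℓ hℓ =>
    (stronglyMeasurable_const.mul ((hc ℓ hℓ).mono (F.mono (Nat.sub_le ℓ 1)))).mul
      ((hg ℓ).sub (stronglyMeasurable_condExp.mono (F.mono (Nat.sub_le ℓ 1))))
  have hd_le : ∀ ℓ, 1 ≤ ℓ → ∀ ω, |d ℓ ω| ≤ |η ℓ| * |g ℓ ω - μ[g ℓ | F (ℓ - 1)] ω| :=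
    fun ℓ hℓ ω => by
      simp only [d, abs_mul]
      exact mul_le_mul_of_nonneg_right
        (mul_le_of_le_one_right (abs_nonneg _) (hc1 ℓ hℓ ω)) (abs_nonneg _)
  have hd2 : ∀ ℓ, 1 ≤ ℓ → MemLp (d ℓ) 2 μ := fun ℓ hℓ =>
    ((hξ2 ℓ).const_mul (η ℓ)).of_le ((hdF ℓ hℓ).mono (F.le ℓ)).aestronglyMeasurable
      (ae_of_all _ fun ω => by simpa [abs_mul] using hd_le ℓ hℓ ω)
  have hd0 : ∀ n, μ[d (n + 1) | F n] =ᵐ[μ] 0 := fun n => by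
    have hc' : StronglyMeasurable[F n] (c (n + 1)) := by simpa using hc (n + 1) (by omega)
    simpa [d, Pi.mul_def, mul_assoc] using
      condExp_mul_sub_condExp_ae_eq_zero (F.le n) (stronglyMeasurable_const.mul hc')
        (fun ω => by simpa [abs_mul] using
          mul_le_of_le_one_right (abs_nonneg (η (n + 1))) (hc1 (n + 1) (by omega) ω))
        ((hg2 (n + 1)).integrable one_le_two)
  refine ae_exists_tendsto_sum_Icc_of_condExp_eq_zero hdF hd2 hd0 <|
    ((summable_nat_add_iff 1).2 hη |>.mul_right B).of_nonneg_of_le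
      (fun n => integral_nonneg fun _ => sq_nonneg _) fun n => ?_
  have hn : 1 ≤ n + 1 := by omega
  calc ∫ ω, d (n + 1) ω ^ 2 ∂μ
      ≤ ∫ ω, η (n + 1) ^ 2 * (g (n + 1) ω - μ[g (n + 1) | F (n + 1 - 1)] ω) ^ 2 ∂μ :=
        integral_mono (hd2 _ hn).integrable_sq ((hξ2 _).integrable_sq.const_mul _) fun ω => by
          simpa [← abs_mul, sq_abs, mul_pow] using
            pow_le_pow_left₀ (abs_nonneg _) (hd_le _ hn ω) 2
    _ ≤ η (n + 1) ^ 2 * B := by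
        rw [integral_const_mul]
        exact mul_le_mul_of_nonneg_left ((integral_sq_sub_condExp_le (F.le _) (hg2 _)).trans
          (hgB _ hn)) (sq_nonneg _)

end MeasureTheory

namespace DualAveraging

section StronglyConvexRegularizer

variable {X : Type*} [Fintype X] {Q : Set (X → ℝ)} {K : ℝ} {h : (X → ℝ) → ℝ}

lemma add_sum_sq_le_of_isMaxOn (hQ : Convex ℝ Q)
    (hh : ConvexOn ℝ Q (fun x => h x - K / 2 * ∑ p, (x p) ^ 2)) {Y x y : X → ℝ}
    (hx : x ∈ Q) (hy : y ∈ Q) (hmax : IsMaxOn (fun z => z ⬝ᵥ Y - h z) Q x) :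
    y ⬝ᵥ Y - h y + K / 4 * ∑ p, (x p - y p) ^ 2 ≤ x ⬝ᵥ Y - h x := by
  have hmid := isMaxOn_iff.1 hmax _ (hQ hx hy (by norm_num : (0 : ℝ) ≤ 1 / 2)
    (by norm_num : (0 : ℝ) ≤ 1 / 2) (by norm_num))
  have hconv := hh.2 hx hy (by norm_num : (0 : ℝ) ≤ 1 / 2) (by norm_num : (0 : ℝ) ≤ 1 / 2)
    (by norm_num)
  have hsq : ∑ p, (((1 / 2 : ℝ) • x + (1 / 2 : ℝ) • y) p) ^ 2
      = 1 / 2 * ∑ p, (x p) ^ 2 + 1 / 2 * ∑ p, (y p) ^ 2 - 1 / 4 * ∑ p, (x p - y p) ^ 2 := by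
    simp only [mul_sum, ← sum_add_distrib, ← sum_sub_distrib]
    exact sum_congr rfl fun p _ => by simp only [Pi.add_apply, Pi.smul_apply, smul_eq_mul]; ring
  simp only [smul_eq_mul, hsq] at hconv
  simp only [add_dotProduct, smul_dotProduct, smul_eq_mul] at hmid
  nlinarith

lemma sum_sq_le_dotProduct_of_isMaxOn (hQ : Convex ℝ Q)
    (hh : ConvexOn ℝ Q (fun x => h x - K / 2 * ∑ p, (x p) ^ 2)) {Y Y' x y : X → ℝ}
    (hx : x ∈ Q) (hy : y ∈ Q) (hmx : IsMaxOn (fun z => z ⬝ᵥ Y - h z) Q x)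
    (hmy : IsMaxOn (fun z => z ⬝ᵥ Y' - h z) Q y) :
    K / 2 * ∑ p, (y p - x p) ^ 2 ≤ (y - x) ⬝ᵥ (Y' - Y) := by
  have h1 := add_sum_sq_le_of_isMaxOn hQ hh hx hy hmx
  have h2 := add_sum_sq_le_of_isMaxOn hQ hh hy hx hmy
  have hsym : ∑ p, (x p - y p) ^ 2 = ∑ p, (y p - x p) ^ 2 :=
    sum_congr rfl fun p _ => by ring
  rw [hsym] at h1
  simp only [sub_dotProduct, dotProduct_sub]
  linarith

lemma dotProduct_le_and_sum_sq_le_of_isMaxOn (hQ : Convex ℝ Q) (hK : 0 < K)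
    (hh : ConvexOn ℝ Q (fun x => h x - K / 2 * ∑ p, (x p) ^ 2)) {Y Y' x y : X → ℝ}
    (hx : x ∈ Q) (hy : y ∈ Q) (hmx : IsMaxOn (fun z => z ⬝ᵥ Y - h z) Q x)
    (hmy : IsMaxOn (fun z => z ⬝ᵥ Y' - h z) Q y) :
    (y - x) ⬝ᵥ (Y' - Y) ≤ 2 / K * ∑ p, (Y' p - Y p) ^ 2 ∧
      ∑ p, (y p - x p) ^ 2 ≤ (2 / K) ^ 2 * ∑ p, (Y' p - Y p) ^ 2 := by
  set a := (y - x) ⬝ᵥ (Y' - Y)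
  set D := ∑ p, (y p - x p) ^ 2
  set B := ∑ p, (Y' p - Y p) ^ 2
  have hmono : K / 2 * D ≤ a := sum_sq_le_dotProduct_of_isMaxOn hQ hh hx hy hmx hmy
  have hCS : a ^ 2 ≤ D * B := sum_mul_sq_le_sq_mul_sq _ _ _
  have hD : 0 ≤ D := sum_nonneg fun p _ => sq_nonneg _
  have hB : 0 ≤ B := sum_nonneg fun p _ => sq_nonneg _
  have ha0 : 0 ≤ a := le_trans (by positivity) hmono
  -- `K a² ≤ K D B ≤ 2 a B`
  have haa : a * (K * a) ≤ a * (2 * B) := by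
    nlinarith [mul_le_mul_of_nonneg_right hmono hB, mul_le_mul_of_nonneg_left hCS hK.le]
  have ha : a ≤ 2 / K * B := by
    rw [div_mul_eq_mul_div, le_div_iff₀ hK]
    rcases ha0.eq_or_lt with ha0 | ha0
    · rw [← ha0, zero_mul]; positivity
    · linarith [le_of_mul_le_mul_left haa ha0]
  refine ⟨ha, ?_⟩
  calc D = 2 / K * (K / 2 * D) := by field_simp
    _ ≤ 2 / K * (2 / K * B) := mul_le_mul_of_nonneg_left (hmono.trans ha) (by positivity)
    _ = (2 / K) ^ 2 * B := by ring

lemma exists_continuous_argmax (hQc : IsCompact Q) (hQne : Q.Nonempty) (hQ : Convex ℝ Q)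
    (hK : 0 < K) (hh : ConvexOn ℝ Q (fun x => h x - K / 2 * ∑ p, (x p) ^ 2))
    (hhc : ContinuousOn h Q) :
    ∃ f : (X → ℝ) → X → ℝ, Continuous f ∧
      ∀ Y x, x ∈ Q → IsMaxOn (fun z => z ⬝ᵥ Y - h z) Q x → x = f Y := by
  have hex : ∀ Y : X → ℝ, ∃ x ∈ Q, IsMaxOn (fun z => z ⬝ᵥ Y - h z) Q x := fun Y =>
    hQc.exists_isMaxOn hQne
      ((continuous_id.dotProduct continuous_const).continuousOn.sub hhc)
  choose f hfQ hfmax using hex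
  have hlip := fun Y Y' => (dotProduct_le_and_sum_sq_le_of_isMaxOn hQ hK hh (hfQ Y) (hfQ Y')
    (hfmax Y) (hfmax Y')).2
  refine ⟨f, continuous_of_sum_sq_sub_le (by positivity) hlip, fun Y x hx hmx => ?_⟩
  have hzero := (dotProduct_le_and_sum_sq_le_of_isMaxOn hQ hK hh hx (hfQ Y) hmx (hfmax Y)).2
  simp only [sub_self, ne_eq, OfNat.ofNat_ne_zero, not_false_eq_true, zero_pow,
    sum_const_zero, mul_zero] at hzero
  have := (sum_eq_zero_iff_of_nonneg fun p _ => sq_nonneg (f Y p - x p)).1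
    (le_antisymm hzero (sum_nonneg fun p _ => sq_nonneg _))
  funext p
  linarith [pow_eq_zero_iff (n := 2) (by norm_num) |>.1 (this p (mem_univ p))]

end StronglyConvexRegularizer

section Simplex

variable {X : Type*} [Fintype X] {x y : X → ℝ}

lemma le_one_of_mem_probSimplex (hx : x ∈ probSimplex X) (p : X) : x p ≤ 1 :=
  hx.2 ▸ single_le_sum (fun q _ => hx.1 q) (mem_univ p)

lemma sub_dotProduct_le_of_mem_probSimplex (hx : x ∈ probSimplex X) (hy : y ∈ probSimplex X)
    {g : X → ℝ} {β : ℝ} (hg : ∀ p, |g p| ≤ β) : (x - y) ⬝ᵥ g ≤ 2 * β := by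
  calc (x - y) ⬝ᵥ g ≤ ∑ p, (x p + y p) * β := sum_le_sum fun p _ => by
        have hxy : |x p - y p| ≤ x p + y p := abs_le.2 ⟨by linarith [hx.1 p], by linarith [hy.1 p]⟩
        calc (x p - y p) * g p ≤ |x p - y p| * |g p| := by rw [← abs_mul]; exact le_abs_self _
          _ ≤ (x p + y p) * β := mul_le_mul hxy (hg p) (abs_nonneg _) (by linarith [hx.1 p, hy.1 p])
    _ = 2 * β := by rw [← sum_mul, sum_add_distrib, hx.2, hy.2]; ring

end Simplex

section Iterates

variable {X : Type*} [Fintype X] {Q : Set (X → ℝ)} {K : ℝ} {h : (X → ℝ) → ℝ} {η : ℕ → ℝ}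

/-- Indexed from `1`: the values of `R`, `Y` and `ρ` at `0` play no role. -/
structure IsDualAveraging (Q : Set (X → ℝ)) (h : (X → ℝ) → ℝ) (η : ℕ → ℝ)
    (R Y ρ : ℕ → X → ℝ) : Prop where
  score_one : Y 1 = 0
  score_succ : ∀ k, 1 ≤ k → Y (k + 1) = Y k + η k • R k
  mem : ∀ k, 1 ≤ k → ρ k ∈ Q
  isMaxOn : ∀ k, 1 ≤ k → IsMaxOn (fun x => x ⬝ᵥ Y k - h x) Q (ρ k)

/-- `E ℓ` stands for the conditional mean of `R ℓ`; this is the part of the regret bound that is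
`o(w k)` almost surely. -/
def regretRemainder (K : ℝ) (η : ℕ → ℝ) (R ρ E : ℕ → X → ℝ) (k : ℕ) : ℝ :=
  2 / K * ∑ ℓ ∈ Icc 1 k, η ℓ ^ 2 * ∑ p, R ℓ p ^ 2
    + ∑ p, (|∑ ℓ ∈ Icc 1 k, η ℓ * (R ℓ p - E ℓ p)|
      + |∑ ℓ ∈ Icc 1 k, η ℓ * ρ ℓ p * (R ℓ p - E ℓ p)|)

namespace IsDualAveraging

variable {R Y ρ : ℕ → X → ℝ}

lemma dotProduct_score (hDA : IsDualAveraging Q h η R Y ρ) (x : X → ℝ) (k : ℕ) :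
    x ⬝ᵥ Y (k + 1) = ∑ ℓ ∈ Icc 1 k, η ℓ * (x ⬝ᵥ R ℓ) := by
  induction k with
  | zero => simp [hDA.score_one]
  | succ k ih =>
    rw [hDA.score_succ (k + 1) (by omega), dotProduct_add, dotProduct_smul, ih,
      sum_Icc_succ_top (by omega), smul_eq_mul]

/-- The be-the-leader inequality. -/
lemma sum_sub_le_sum_succ (hDA : IsDualAveraging Q h η R Y ρ) (k : ℕ) :
    ∀ θ ∈ Q, ∑ ℓ ∈ Icc 1 k, η ℓ * (θ ⬝ᵥ R ℓ) - h θ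
      ≤ ∑ ℓ ∈ Icc 1 k, η ℓ * (ρ (ℓ + 1) ⬝ᵥ R ℓ) - h (ρ 1) := by
  induction k with
  | zero =>
    intro θ hθ
    simpa [hDA.score_one] using isMaxOn_iff.1 (hDA.isMaxOn 1 le_rfl) θ hθ
  | succ k ih =>
    intro θ hθ
    have hmax := isMaxOn_iff.1 (hDA.isMaxOn (k + 1 + 1) (by omega)) θ hθ
    have hlead := ih (ρ (k + 1 + 1)) (hDA.mem (k + 1 + 1) (by omega))
    simp only [hDA.dotProduct_score, sum_Icc_succ_top (show 1 ≤ k + 1 by omega)]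
      at hmax ⊢
    linarith

lemma regret_le (hDA : IsDualAveraging Q h η R Y ρ) (hQ : Convex ℝ Q) (hK : 0 < K)
    (hh : ConvexOn ℝ Q (fun x => h x - K / 2 * ∑ p, (x p) ^ 2)) (k : ℕ) {θ : X → ℝ}
    (hθ : θ ∈ Q) :
    ∑ ℓ ∈ Icc 1 k, η ℓ * ((θ - ρ ℓ) ⬝ᵥ R ℓ)
      ≤ h θ - h (ρ 1) + 2 / K * ∑ ℓ ∈ Icc 1 k, η ℓ ^ 2 * ∑ p, R ℓ p ^ 2 := by
  have hstep : ∀ ℓ ∈ Icc 1 k,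
      η ℓ * ((ρ (ℓ + 1) - ρ ℓ) ⬝ᵥ R ℓ) ≤ 2 / K * (η ℓ ^ 2 * ∑ p, R ℓ p ^ 2) := by
    intro ℓ hℓ
    have hℓ : 1 ≤ ℓ := (mem_Icc.1 hℓ).1
    have hΔ : Y (ℓ + 1) - Y ℓ = η ℓ • R ℓ := by rw [hDA.score_succ ℓ hℓ]; abel
    have hΔp : ∀ p, Y (ℓ + 1) p - Y ℓ p = η ℓ * R ℓ p := fun p => congrFun hΔ p
    have := (dotProduct_le_and_sum_sq_le_of_isMaxOn hQ hK hh (hDA.mem ℓ hℓ)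
      (hDA.mem (ℓ + 1) (by omega)) (hDA.isMaxOn ℓ hℓ) (hDA.isMaxOn (ℓ + 1) (by omega))).1
    simpa only [hΔ, hΔp, dotProduct_smul, smul_eq_mul, mul_pow, ← mul_sum] using this
  have hlead := hDA.sum_sub_le_sum_succ k θ hθ
  have hsum := sum_le_sum hstep
  simp only [sub_dotProduct, mul_sub, sum_sub_distrib, ← mul_sum] at hsum ⊢
  linarith

lemma sum_mul_dotProduct_le (hDA : IsDualAveraging Q h η R Y ρ) (hQ : Convex ℝ Q)
    (hK : 0 < K) (hh : ConvexOn ℝ Q (fun x => h x - K / 2 * ∑ p, (x p) ^ 2))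
    (hQsub : Q ⊆ probSimplex X) (hη : ∀ k, 0 ≤ η k) {v E : ℕ → X → ℝ} {β : ℝ}
    (hbias : ∀ ℓ, 1 ≤ ℓ → ∀ p, |E ℓ p - v ℓ p| ≤ β) (k : ℕ) {θ : X → ℝ} (hθ : θ ∈ Q) :
    ∑ ℓ ∈ Icc 1 k, η ℓ * ((θ - ρ ℓ) ⬝ᵥ v ℓ)
      ≤ h θ - h (ρ 1) + regretRemainder K η R ρ E k + 2 * β * ∑ ℓ ∈ Icc 1 k, η ℓ := by
  have hsplit : ∀ ℓ, η ℓ * ((θ - ρ ℓ) ⬝ᵥ v ℓ) = η ℓ * ((θ - ρ ℓ) ⬝ᵥ R ℓ)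
      + η ℓ * ((θ - ρ ℓ) ⬝ᵥ (E ℓ - R ℓ)) + η ℓ * ((θ - ρ ℓ) ⬝ᵥ (v ℓ - E ℓ)) := fun ℓ => by
    simp only [dotProduct_sub]; ring
  have hnoise : ∑ ℓ ∈ Icc 1 k, η ℓ * ((θ - ρ ℓ) ⬝ᵥ (E ℓ - R ℓ))
      = ∑ p, (-(θ p * ∑ ℓ ∈ Icc 1 k, η ℓ * (R ℓ p - E ℓ p))
        + ∑ ℓ ∈ Icc 1 k, η ℓ * ρ ℓ p * (R ℓ p - E ℓ p)) := by
    simp only [mul_sum, ← sum_neg_distrib, ← sum_add_distrib, dotProduct]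
    rw [sum_comm]
    exact sum_congr rfl fun ℓ _ => sum_congr rfl fun p _ => by simp only [Pi.sub_apply]; ring
  have hnoise_le : ∀ p, -(θ p * ∑ ℓ ∈ Icc 1 k, η ℓ * (R ℓ p - E ℓ p))
      ≤ |∑ ℓ ∈ Icc 1 k, η ℓ * (R ℓ p - E ℓ p)| := fun p =>
    (neg_le_abs _).trans <| by
      rw [abs_mul, abs_of_nonneg ((hQsub hθ).1 p)]
      exact mul_le_of_le_one_left (abs_nonneg _) (le_one_of_mem_probSimplex (hQsub hθ) p)
  have hbias_le : ∀ ℓ ∈ Icc 1 k, η ℓ * ((θ - ρ ℓ) ⬝ᵥ (v ℓ - E ℓ)) ≤ 2 * β * η ℓ := by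
    intro ℓ hℓ
    have hℓ := (mem_Icc.1 hℓ).1
    rw [mul_comm (2 * β)]
    exact mul_le_mul_of_nonneg_left (sub_dotProduct_le_of_mem_probSimplex (hQsub hθ)
      (hQsub (hDA.mem ℓ hℓ)) fun p => by rw [Pi.sub_apply, abs_sub_comm]; exact hbias ℓ hℓ p)
      (hη ℓ)
  rw [sum_congr rfl fun ℓ _ => hsplit ℓ, sum_add_distrib, sum_add_distrib, hnoise,
    regretRemainder, ← add_assoc]
  gcongr ?_ + ?_ + ?_
  · exact hDA.regret_le hQ hK hh k hθ
  · exact sum_le_sum fun p _ => add_le_add (hnoise_le p) (le_abs_self _)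
  · exact (sum_le_sum hbias_le).trans_eq (mul_sum _ _ _).symm

end IsDualAveraging

variable {Ω : Type*} {m0 : MeasurableSpace Ω} {μ : Measure Ω} {R Y ρ : ℕ → Ω → X → ℝ}

lemma measurable_score (F : Filtration ℕ m0)
    (hDA : ∀ ω, IsDualAveraging Q h η (R · ω) (Y · ω) (ρ · ω))
    (hR : ∀ k, Measurable[F k] (R k)) : ∀ k, 1 ≤ k → Measurable[F (k - 1)] (Y k)
  | 0, hk => absurd hk (by omega)
  | 1, _ => by
    rw [show Y 1 = fun _ => 0 from funext fun ω => (hDA ω).score_one]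
    exact measurable_const
  | k + 2, _ => by
    rw [show Y (k + 2) = fun ω => Y (k + 1) ω + η (k + 1) • R (k + 1) ω from
      funext fun ω => (hDA ω).score_succ (k + 1) (by omega)]
    exact ((measurable_score F hDA hR (k + 1) (by omega)).mono (F.mono (by omega)) le_rfl).add
      ((hR (k + 1)).const_smul (η (k + 1)))

lemma measurable_iterate (F : Filtration ℕ m0)
    (hDA : ∀ ω, IsDualAveraging Q h η (R · ω) (Y · ω) (ρ · ω))
    (hR : ∀ k, Measurable[F k] (R k)) (hQc : IsCompact Q) (hQne : Q.Nonempty)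
    (hQ : Convex ℝ Q) (hK : 0 < K) (hh : ConvexOn ℝ Q (fun x => h x - K / 2 * ∑ p, (x p) ^ 2))
    (hhc : ContinuousOn h Q) (k : ℕ) (hk : 1 ≤ k) : Measurable[F (k - 1)] (ρ k) := by
  obtain ⟨f, hf, hfmax⟩ := exists_continuous_argmax hQc hQne hQ hK hh hhc
  rw [show ρ k = f ∘ Y k from
    funext fun ω => hfmax _ _ ((hDA ω).mem k hk) ((hDA ω).isMaxOn k hk)]
  exact hf.measurable.comp (measurable_score F hDA hR k hk)

lemma ae_exists_tendsto_regretRemainder [IsProbabilityMeasure μ] (F : Filtration ℕ m0)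
    (hDA : ∀ ω, IsDualAveraging Q h η (R · ω) (Y · ω) (ρ · ω)) (hQc : IsCompact Q)
    (hQne : Q.Nonempty) (hQ : Convex ℝ Q) (hQsub : Q ⊆ probSimplex X) (hK : 0 < K)
    (hh : ConvexOn ℝ Q (fun x => h x - K / 2 * ∑ p, (x p) ^ 2)) (hhc : ContinuousOn h Q)
    (hR : ∀ k, Measurable[F k] (R k)) (hR2 : ∀ k, Integrable (fun ω => ∑ p, R k ω p ^ 2) μ)
    {B : ℝ} (hRB : ∀ k, 1 ≤ k → ∫ ω, ∑ p, R k ω p ^ 2 ∂μ ≤ B)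
    (hη : Summable fun k => η k ^ 2) :
    ∀ᵐ ω ∂μ, ∃ L, Tendsto (fun k => regretRemainder K η (R · ω) (ρ · ω)
      (fun ℓ p => μ[fun ω' => R ℓ ω' p | F (ℓ - 1)] ω) k) atTop (𝓝 L) := by
  have hRp : ∀ k p, StronglyMeasurable[F k] (fun ω => R k ω p) := fun k p =>
    ((measurable_pi_apply p).comp (hR k)).stronglyMeasurable
  have hsq_le : ∀ k ω p, R k ω p ^ 2 ≤ ∑ q, R k ω q ^ 2 := fun k ω p =>
    single_le_sum (f := fun q => R k ω q ^ 2) (fun q _ => sq_nonneg _) (mem_univ p)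
  have hRp2 : ∀ k p, MemLp (fun ω => R k ω p) 2 μ := fun k p => by
    have hm := ((hRp k p).mono (F.le k)).aestronglyMeasurable (μ := μ)
    refine (memLp_two_iff_integrable_sq hm).2 <| (hR2 k).mono' (hm.pow 2) (ae_of_all _ fun ω => ?_)
    rw [Real.norm_of_nonneg (sq_nonneg _)]
    exact hsq_le k ω p
  have hRpB : ∀ k, 1 ≤ k → ∀ p, ∫ ω, R k ω p ^ 2 ∂μ ≤ B := fun k hk p =>
    (integral_mono (hRp2 k p).integrable_sq (hR2 k) fun ω => hsq_le k ω p).trans (hRB k hk)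
  have hρ : ∀ k, 1 ≤ k → ∀ p, StronglyMeasurable[F (k - 1)] (fun ω => ρ k ω p) := fun k hk p =>
    ((measurable_pi_apply p).comp (measurable_iterate F hDA hR hQc hQne hQ hK hh hhc k hk))
      |>.stronglyMeasurable
  have hρ1 : ∀ k, 1 ≤ k → ∀ ω p, |ρ k ω p| ≤ 1 := fun k hk ω p => by
    have hmem := hQsub ((hDA ω).mem k hk)
    exact abs_le.2 ⟨by linarith [hmem.1 p], le_one_of_mem_probSimplex hmem p⟩
  have hN1 : ∀ p, ∀ᵐ ω ∂μ, ∃ L, Tendsto (fun k => ∑ ℓ ∈ Icc 1 k,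
      η ℓ * (R ℓ ω p - μ[fun ω' => R ℓ ω' p | F (ℓ - 1)] ω)) atTop (𝓝 L) := fun p => by
    simpa using ae_tendsto_sum_mul_sub_condExp F (c := fun _ _ => 1) (fun k => hRp k p)
      (fun k => hRp2 k p) (fun k hk => hRpB k hk p) (fun _ _ => stronglyMeasurable_const)
      (fun _ _ _ => by simp) hη
  have hN2 : ∀ p, ∀ᵐ ω ∂μ, ∃ L, Tendsto (fun k => ∑ ℓ ∈ Icc 1 k,
      η ℓ * ρ ℓ ω p * (R ℓ ω p - μ[fun ω' => R ℓ ω' p | F (ℓ - 1)] ω)) atTop (𝓝 L) := fun p =>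
    ae_tendsto_sum_mul_sub_condExp F (fun k => hRp k p) (fun k => hRp2 k p)
      (fun k hk => hRpB k hk p) (fun k hk => hρ k hk p) (fun k hk ω => hρ1 k hk ω p) hη
  have hstepB : ∀ j, ∫ ω, η (j + 1) ^ 2 * ∑ p, R (j + 1) ω p ^ 2 ∂μ ≤ η (j + 1) ^ 2 * B :=
    fun j => by
      rw [integral_const_mul]
      exact mul_le_mul_of_nonneg_left (hRB (j + 1) (by omega)) (sq_nonneg _)
  have hS : ∀ᵐ ω ∂μ, Summable fun j => η (j + 1) ^ 2 * ∑ p, R (j + 1) ω p ^ 2 :=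
    ae_summable_of_integral_le (fun j ω => by positivity) (fun j => (hR2 (j + 1)).const_mul _)
      hstepB (((summable_nat_add_iff 1).2 hη).mul_right B)
  filter_upwards [ae_all_iff.2 hN1, ae_all_iff.2 hN2, hS] with ω h1 h2 hS
  choose L1 hL1 using h1
  choose L2 hL2 using h2
  exact ⟨_, ((tendsto_sum_Icc_one_of_summable (f := fun ℓ => η ℓ ^ 2 * ∑ p, R ℓ ω p ^ 2)
    hS).const_mul (2 / K)).add (tendsto_finsetSum univ fun p _ => (hL1 p).abs.add (hL2 p).abs)⟩

end Iterates

section Game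

variable {n : ℕ} {S A : Fin n → Type*} [∀ j, Fintype (S j)] [∀ j, Fintype (A j)]

lemma payoff_update (ri : (∀ j, S j) → (∀ j, A j) → ℝ) (ρ : ∀ j, S j × A j → ℝ) (i : Fin n)
    (x : S i × A i → ℝ) :
    payoff ri (Function.update ρ i x)
      = ∑ s, ∑ a, x (s i, a i) * ((∏ j ∈ univ.erase i, ρ j (s j, a j)) * ri s a) := by
  unfold payoff
  refine sum_congr rfl fun s _ => sum_congr rfl fun a _ => ?_
  rw [← mul_prod_erase _ _ (mem_univ i), Function.update_self, mul_assoc]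
  congr 2
  exact prod_congr rfl fun j hj => by rw [Function.update_of_ne (ne_of_mem_erase hj)]

lemma payoff_update_eq_dotProduct (ri : (∀ j, S j) → (∀ j, A j) → ℝ)
    (ρ : ∀ j, S j × A j → ℝ) (i : Fin n) (x : S i × A i → ℝ) :
    payoff ri (Function.update ρ i x) = x ⬝ᵥ ownGrad ri i ρ := by
  simp only [dotProduct, ownGrad, payoff_update, mul_sum]
  conv_rhs => rw [sum_comm]
  refine sum_congr rfl fun s _ => ?_
  conv_rhs => rw [sum_comm]
  refine sum_congr rfl fun a _ => ?_
  simp [ite_mul]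

lemma NI_eq_sum_dotProduct (r : ∀ _ : Fin n, (∀ j, S j) → (∀ j, A j) → ℝ)
    (θ ρ : ∀ j, S j × A j → ℝ) :
    NI r θ ρ = ∑ i, (θ i - ρ i) ⬝ᵥ ownGrad (r i) i ρ := by
  refine sum_congr rfl fun i _ => ?_
  conv_lhs => enter [2, 2]; rw [← Function.update_eq_self i ρ]
  rw [payoff_update_eq_dotProduct, payoff_update_eq_dotProduct, sub_dotProduct]

lemma sum_mul_NI_le (r : ∀ _ : Fin n, (∀ j, S j) → (∀ j, A j) → ℝ) {Q : ∀ i, Set (S i × A i → ℝ)}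
    {h : ∀ i, (S i × A i → ℝ) → ℝ} {K : ℝ} {η : ℕ → ℝ} {R Y E : ℕ → ∀ i, S i × A i → ℝ}
    {ρ : ℕ → ∀ j, S j × A j → ℝ} {β : ℝ}
    (hDA : ∀ i, IsDualAveraging (Q i) (h i) η (R · i) (Y · i) (ρ · i))
    (hQ : ∀ i, Convex ℝ (Q i)) (hK : 0 < K)
    (hh : ∀ i, ConvexOn ℝ (Q i) (fun x => h i x - K / 2 * ∑ p, (x p) ^ 2))
    (hQsub : ∀ i, Q i ⊆ probSimplex (S i × A i)) (hη : ∀ k, 0 ≤ η k)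
    (hbias : ∀ ℓ, 1 ≤ ℓ → ∀ i p, |E ℓ i p - ownGrad (r i) i (ρ ℓ) p| ≤ β) (k : ℕ)
    {θ : ∀ j, S j × A j → ℝ} (hθ : ∀ i, θ i ∈ Q i) :
    ∑ ℓ ∈ Icc 1 k, η ℓ * NI r θ (ρ ℓ)
      ≤ ∑ i, (h i (θ i) - h i (ρ 1 i) + regretRemainder K η (R · i) (ρ · i) (E · i) k)
        + 2 * n * β * ∑ ℓ ∈ Icc 1 k, η ℓ :=
  calc ∑ ℓ ∈ Icc 1 k, η ℓ * NI r θ (ρ ℓ)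
      = ∑ i, ∑ ℓ ∈ Icc 1 k, η ℓ * ((θ i - ρ ℓ i) ⬝ᵥ ownGrad (r i) i (ρ ℓ)) := by
        simp only [NI_eq_sum_dotProduct, mul_sum]
        exact sum_comm
    _ ≤ ∑ i, (h i (θ i) - h i (ρ 1 i) + regretRemainder K η (R · i) (ρ · i) (E · i) k
          + 2 * β * ∑ ℓ ∈ Icc 1 k, η ℓ) :=
        sum_le_sum fun i _ => (hDA i).sum_mul_dotProduct_le (hQ i) hK (hh i) (hQsub i) hη
          (fun ℓ hℓ p => hbias ℓ hℓ i p) k (hθ i)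
    _ = _ := by
        rw [sum_add_distrib, sum_const, card_univ, Fintype.card_fin, nsmul_eq_mul]
        ring

end Game

end DualAveraging

open DualAveraging

theorem dual_averaging_NI_gap_as_convergence_general
    {n : ℕ}
    {S A : Fin n → Type*}
    [∀ j, Fintype (S j)]
    [∀ j, Fintype (A j)]
    (r : ∀ _ : Fin n, (∀ j, S j) → (∀ j, A j) → ℝ)
    (P : ∀ i : Fin n, Set ((S i × A i) → ℝ))
    (hPcpt : ∀ i, IsCompact (P i))
    (hPcvx : ∀ i, Convex ℝ (P i)) (hPsub : ∀ i, P i ⊆ probSimplex (S i × A i))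
    (δ : Fin n → ℝ)
    (Pδ : ∀ i : Fin n, Set ((S i × A i) → ℝ))
    (hPδdef : ∀ i, Pδ i = {x ∈ P i | ∀ p, δ i ≤ x p})
    (hPδne : ∀ i, (Pδ i).Nonempty)
    -- probability space and filtration
    {Ω : Type*} [m0 : MeasurableSpace Ω] (μ : Measure Ω) [IsProbabilityMeasure μ]
    (F : Filtration ℕ m0)
    -- regularizers: K-strongly convex and continuous
    (K : ℝ) (hK : 0 < K)
    (h : ∀ i : Fin n, ((S i × A i) → ℝ) → ℝ)
    (hhconv : ∀ i, ConvexOn ℝ (Pδ i) (fun x => h i x - K / 2 * ∑ p, (x p) ^ 2))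
    (hhcont : ∀ i, ContinuousOn (h i) (Pδ i))
    -- step sizes: ∑ η^ℓ = ∞ and ∑ (η^ℓ)² < ∞
    (η : ℕ → ℝ) (hη : ∀ k, 0 < η k)
    (w : ℕ → ℝ) (hw : ∀ k, w k = ∑ ℓ ∈ Finset.Icc 1 k, η ℓ)
    (hdiv : Tendsto w atTop atTop)
    (hsq : Summable (fun ℓ => (η ℓ) ^ 2))
    -- gradient estimates: F^k-measurable, square-integrable
    (R : ℕ → Ω → ∀ i : Fin n, (S i × A i) → ℝ)
    (hRmeas : ∀ k i p, Measurable[F k] (fun ω => R k ω i p))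
    (hRsq : ∀ k i, Integrable (fun ω => ∑ p, (R k ω i p) ^ 2) μ)
    -- dual scores
    (Y : ℕ → Ω → ∀ i : Fin n, (S i × A i) → ℝ)
    (hY1 : ∀ ω i p, Y 1 ω i p = 0)
    (hYrec : ∀ k, 1 ≤ k → ∀ ω i p, Y (k + 1) ω i p = Y k ω i p + η k * R k ω i p)
    -- iterates: ρ_i^k = argmax over Pδ_i of ⟨ρ_i, Y_i^k⟩ − h_i(ρ_i)
    (ρ : ℕ → Ω → ∀ j, S j × A j → ℝ)
    (hρ : ∀ k, 1 ≤ k → ∀ ω i, ρ k ω i ∈ Pδ i ∧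
      ∀ x ∈ Pδ i, (∑ p, x p * Y k ω i p) - h i x ≤
        (∑ p, ρ k ω i p * Y k ω i p) - h i (ρ k ω i))
    -- accuracy and bias level
    (ε : ℝ) (hε : 0 < ε) (β : ℝ)
    (hβ : β ≤ ε / (6 * n * ∑ i : Fin n,
      ((Fintype.card (S i) : ℝ) * (Fintype.card (A i) : ℝ))))
    -- gradient-estimate assumptions: bias and conditional second moment
    (hbias : ∀ k, 1 ≤ k → ∀ i, ∀ᵐ ω ∂μ, ∀ p,
      |(μ[(fun ω' => R k ω' i p) | F (k - 1)]) ω - ownGrad (r i) i (ρ k ω) p| ≤ β)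
    (hmom : ∀ k, 1 ≤ k → ∀ i, ∀ᵐ ω ∂μ,
      (μ[(fun ω' => ∑ p, (R k ω' i p) ^ 2) | F (k - 1)]) ω ≤
        ((Fintype.card (S i) : ℝ) * (Fintype.card (A i) : ℝ)) / δ i) :
    -- conclusion: a.s. eventually max_{θ ∈ P^δ} ∑_{ℓ=1}^k (η^ℓ/w^k) Ψ(θ, ρ^ℓ) < ε/2
    ∀ᵐ ω ∂μ, ∃ K0 : ℕ, ∀ k, K0 ≤ k →
      ∀ θ : ∀ j, S j × A j → ℝ, (∀ i, θ i ∈ Pδ i) →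
        ∑ ℓ ∈ Finset.Icc 1 k, (η ℓ / w k) * NI r θ (ρ ℓ ω) < ε / 2 := by
  have hPδ : ∀ i, IsCompact (Pδ i) ∧ Convex ℝ (Pδ i) ∧ Pδ i ⊆ probSimplex (S i × A i) :=
    fun i => by
      rw [hPδdef i]
      exact ⟨(hPcpt i).sep_forall_le _, (hPcvx i).sep_forall_le _, fun x hx => hPsub i hx.1⟩
  have hDA : ∀ ω i, IsDualAveraging (Pδ i) (h i) η (R · ω i) (Y · ω i) (ρ · ω i) := fun ω i =>
    ⟨funext (hY1 ω i), fun k hk => funext (hYrec k hk ω i), fun k hk => (hρ k hk ω i).1,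
      fun k hk => isMaxOn_iff.2 (hρ k hk ω i).2⟩
  have hrem : ∀ᵐ ω ∂μ, ∀ i, ∃ L, Tendsto (fun k => regretRemainder K η (R · ω i) (ρ · ω i)
      (fun ℓ p => μ[fun ω' => R ℓ ω' i p | F (ℓ - 1)] ω) k) atTop (𝓝 L) :=
    ae_all_iff.2 fun i => ae_exists_tendsto_regretRemainder F (fun ω => hDA ω i) (hPδ i).1
      (hPδne i) (hPδ i).2.1 (hPδ i).2.2 hK (hhconv i) (hhcont i)
      (fun k => @measurable_pi_lambda Ω _ _ (F k) _ _ (hRmeas k i)) (hRsq · i)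
      (fun k hk => integral_le_of_ae_condExp_le (F.le _) (hmom k hk i)) hsq
  have hbias' : ∀ᵐ ω ∂μ, ∀ k, 1 ≤ k → ∀ i p,
      |μ[fun ω' => R k ω' i p | F (k - 1)] ω - ownGrad (r i) i (ρ k ω) p| ≤ β :=
    ae_all_iff.2 fun k => eventually_imp_distrib_left.2 fun hk => ae_all_iff.2 (hbias k hk)
  have hbdd := fun i => (hPδ i).1.exists_bound_of_continuousOn (hhcont i)
  choose C hC using hbdd
  have hβε := two_mul_mul_lt_half_of_le_div
    (N := ∑ i, Fintype.card (S i) * Fintype.card (A i)) hε (by push_cast; exact hβ)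
  filter_upwards [hrem, hbias'] with ω hrem hbias
  choose L hL using hrem
  obtain ⟨K0, hK0⟩ := eventually_atTop.1 (eventually_div_lt_of_tendsto
    (tendsto_finsetSum univ fun i _ => (hL i).const_add (2 * C i)) hdiv hβε)
  refine ⟨K0, fun k hk θ hθ => ?_⟩
  simp only [div_mul_eq_mul_div, ← sum_div]
  refine hK0 k hk _ ((sum_mul_NI_le r (hDA ω) (fun i => (hPδ i).2.1) hK hhconv
    (fun i => (hPδ i).2.2) (fun k => (hη k).le) hbias k hθ).trans ?_)
  rw [hw k]
  gcongr with i
  linarith [abs_le.1 (hC i _ (hθ i)), abs_le.1 (hC i _ (hρ 1 le_rfl ω i).1)]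

/-- almost-sure convergence of the averaged Nikaido–Isoda gap of
the dual-averaging iterates below `ε/2`. -/
theorem dual_averaging_NI_gap_as_convergence
    {n : ℕ} (hn : 0 < n)
    {S A : Fin n → Type*}
    [∀ j, Fintype (S j)] [∀ j, Nonempty (S j)]
    [∀ j, Fintype (A j)] [∀ j, Nonempty (A j)]
    (r : ∀ _ : Fin n, (∀ j, S j) → (∀ j, A j) → ℝ)
    (hr : ∀ i s a, r i s a ∈ Set.Icc (0:ℝ) 1)
    (P : ∀ i : Fin n, Set ((S i × A i) → ℝ))
    (hPne : ∀ i, (P i).Nonempty) (hPcpt : ∀ i, IsCompact (P i))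
    (hPcvx : ∀ i, Convex ℝ (P i)) (hPsub : ∀ i, P i ⊆ probSimplex (S i × A i))
    (δ : Fin n → ℝ) (hδ : ∀ i, δ i ∈ Set.Ioo (0:ℝ) 1)
    (Pδ : ∀ i : Fin n, Set ((S i × A i) → ℝ))
    (hPδdef : ∀ i, Pδ i = {x ∈ P i | ∀ p, δ i ≤ x p})
    (hPδne : ∀ i, (Pδ i).Nonempty)
    -- probability space and filtration
    {Ω : Type*} [m0 : MeasurableSpace Ω] (μ : Measure Ω) [IsProbabilityMeasure μ]
    (F : Filtration ℕ m0)
    -- regularizers: K-strongly convex and continuous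
    (K : ℝ) (hK : 0 < K)
    (h : ∀ i : Fin n, ((S i × A i) → ℝ) → ℝ)
    (hhconv : ∀ i, ConvexOn ℝ (Pδ i) (fun x => h i x - K / 2 * ∑ p, (x p) ^ 2))
    (hhcont : ∀ i, ContinuousOn (h i) (Pδ i))
    -- step sizes: ∑ η^ℓ = ∞ and ∑ (η^ℓ)² < ∞
    (η : ℕ → ℝ) (hη : ∀ k, 0 < η k)
    (w : ℕ → ℝ) (hw : ∀ k, w k = ∑ ℓ ∈ Finset.Icc 1 k, η ℓ)
    (hdiv : Tendsto w atTop atTop)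
    (hsq : Summable (fun ℓ => (η ℓ) ^ 2))
    -- gradient estimates: F^k-measurable, square-integrable
    (R : ℕ → Ω → ∀ i : Fin n, (S i × A i) → ℝ)
    (hRmeas : ∀ k i p, Measurable[F k] (fun ω => R k ω i p))
    (hRsq : ∀ k i, Integrable (fun ω => ∑ p, (R k ω i p) ^ 2) μ)
    -- dual scores
    (Y : ℕ → Ω → ∀ i : Fin n, (S i × A i) → ℝ)
    (hY1 : ∀ ω i p, Y 1 ω i p = 0)
    (hYrec : ∀ k, 1 ≤ k → ∀ ω i p, Y (k + 1) ω i p = Y k ω i p + η k * R k ω i p)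
    -- iterates: ρ_i^k = argmax over Pδ_i of ⟨ρ_i, Y_i^k⟩ − h_i(ρ_i)
    (ρ : ℕ → Ω → ∀ j, S j × A j → ℝ)
    (hρ : ∀ k, 1 ≤ k → ∀ ω i, ρ k ω i ∈ Pδ i ∧
      ∀ x ∈ Pδ i, (∑ p, x p * Y k ω i p) - h i x ≤
        (∑ p, ρ k ω i p * Y k ω i p) - h i (ρ k ω i))
    -- accuracy and bias level
    (ε : ℝ) (hε : 0 < ε) (β : ℝ)
    (hβ : β ≤ ε / (6 * n * ∑ i : Fin n,
      ((Fintype.card (S i) : ℝ) * (Fintype.card (A i) : ℝ))))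
    -- gradient-estimate assumptions: bias and conditional second moment
    (hbias : ∀ k, 1 ≤ k → ∀ i, ∀ᵐ ω ∂μ, ∀ p,
      |(μ[(fun ω' => R k ω' i p) | F (k - 1)]) ω - ownGrad (r i) i (ρ k ω) p| ≤ β)
    (hmom : ∀ k, 1 ≤ k → ∀ i, ∀ᵐ ω ∂μ,
      (μ[(fun ω' => ∑ p, (R k ω' i p) ^ 2) | F (k - 1)]) ω ≤
        ((Fintype.card (S i) : ℝ) * (Fintype.card (A i) : ℝ)) / δ i) :
    -- conclusion: a.s. eventually max_{θ ∈ P^δ} ∑_{ℓ=1}^k (η^ℓ/w^k) Ψ(θ, ρ^ℓ) < ε/2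
    ∀ᵐ ω ∂μ, ∃ K0 : ℕ, ∀ k, K0 ≤ k →
      ∀ θ : ∀ j, S j × A j → ℝ, (∀ i, θ i ∈ Pδ i) →
        ∑ ℓ ∈ Finset.Icc 1 k, (η ℓ / w k) * NI r θ (ρ ℓ ω) < ε / 2 :=
  dual_averaging_NI_gap_as_convergence_general r P hPcpt hPcvx hPsub δ Pδ hPδdef hPδne (m0 := m0) μ
    F K hK h hhconv hhcont η hη w hw hdiv hsq R hRmeas hRsq Y hY1 hYrec ρ hρ ε hε β hβ hbias hmom
end
end
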